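/- arXiv:2603.17600 — 5 statements merged into one kernel-verified Lean document; each statement's English description precedes it below -/
import Mathlib

section
/- There exists a function f in the class C_☾ of convex functions associated with the lune whose first two inverse logarithmic coefficients Γ₁ = −a₂/2 and Γ₂ = −a₃/2 + 3a₂²/4 satisfy |Γ₂| − |Γ₁| = −4/21; hence the lower bound |Γ₂| − |Γ₁| ≥ −4/21 for C_☾ is sharp. -/
open Complex Metric Set intervalIntegral

set_option maxHeartbeats 1000000

noncomputable section LuneAux

def Complex.abs : AbsoluteValue ℂ ℝ := IsAbsoluteValue.toAbsoluteValue (norm : ℂ → ℝ)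

@[simp] lemma Complex.abs_apply (z : ℂ) : Complex.abs z = ‖z‖ := rfl
lemma Complex.norm_eq_abs (z : ℂ) : ‖z‖ = Complex.abs z := rfl
lemma Complex.abs_ofReal (r : ℝ) : Complex.abs (r : ℂ) = |r| :=
  (Complex.norm_real r).trans (Real.norm_eq_abs r)
lemma Complex.sq_abs (z : ℂ) : Complex.abs z ^ 2 = Complex.normSq z := Complex.sq_norm z
lemma Complex.re_le_abs (z : ℂ) : z.re ≤ Complex.abs z := Complex.re_le_norm z
lemma Complex.abs_re_le_abs (z : ℂ) : |z.re| ≤ Complex.abs z := Complex.abs_re_le_norm z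
lemma Complex.abs_im_le_abs (z : ℂ) : |z.im| ≤ Complex.abs z := Complex.abs_im_le_norm z

def lB (z : ℂ) : ℂ := (z + 6/7) / (1 + (6/7) * z)
def lom (z : ℂ) : ℂ := z * lB z
def lS (z : ℂ) : ℂ := (1 + lom z ^ 2) ^ (1/2 : ℂ)
def lh (z : ℂ) : ℂ := 2 * lB z / (lS z + 1 - lom z)

lemma lden_ne {z : ℂ} (hz : Complex.abs z < 1) : (1 : ℂ) + (6/7) * z ≠ 0 := by
  intro h
  have h2 : (6/7 : ℂ) * z = -1 := by linear_combination h
  have := congrArg Complex.abs h2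
  simp [map_mul] at this
  rw [Complex.norm_eq_abs] at this
  nlinarith [Complex.abs.nonneg z]

lemma lB_le {z : ℂ} (hz : Complex.abs z < 1) : Complex.abs (lB z) ≤ 1 := by
  have hd := lden_ne hz
  have hsq : Complex.abs (z + 6/7) ^ 2 ≤ Complex.abs (1 + (6/7) * z) ^ 2 := by
    rw [Complex.sq_abs, Complex.sq_abs]
    have habs : z.re ^ 2 + z.im ^ 2 < 1 := by
      have := Complex.sq_abs z
      rw [Complex.normSq_apply] at this
      nlinarith [Complex.abs.nonneg z]
    simp only [Complex.normSq_apply, Complex.add_re, Complex.add_im, Complex.mul_re,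
      Complex.mul_im, Complex.one_re, Complex.one_im]
    norm_num
    nlinarith
  have h1 : Complex.abs (z + 6/7) ≤ Complex.abs (1 + (6/7) * z) := by
    nlinarith [Complex.abs.nonneg (z + 6/7), Complex.abs.nonneg (1 + (6/7) * z)]
  rw [lB, map_div₀, div_le_one (by
    have := Complex.abs.nonneg (1 + (6/7) * z)
    rcases this.lt_or_eq with h | h
    · exact h
    · exact absurd (Complex.abs.eq_zero.mp h.symm) hd)]
  exact h1

lemma lom_le {z : ℂ} (hz : Complex.abs z < 1) : Complex.abs (lom z) ≤ Complex.abs z := by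
  rw [lom, map_mul]
  calc Complex.abs z * Complex.abs (lB z) ≤ Complex.abs z * 1 :=
        mul_le_mul_of_nonneg_left (lB_le hz) (Complex.abs.nonneg z)
    _ = Complex.abs z := mul_one _

lemma lom_lt {z : ℂ} (hz : Complex.abs z < 1) : Complex.abs (lom z) < 1 :=
  (lom_le hz).trans_lt hz

lemma lre_pos {z : ℂ} (hz : Complex.abs z < 1) : 0 < (1 + lom z ^ 2).re := by
  have h1 : Complex.abs (lom z ^ 2) < 1 := by
    rw [map_pow]
    nlinarith [lom_lt hz, Complex.abs.nonneg (lom z)]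
  have h2 : |(lom z ^ 2).re| ≤ Complex.abs (lom z ^ 2) := Complex.abs_re_le_abs _
  simp only [Complex.add_re, Complex.one_re]
  cases abs_le.mp h2 with
  | intro hl hr => linarith

lemma lone_add_ne {z : ℂ} (hz : Complex.abs z < 1) : (1 : ℂ) + lom z ^ 2 ≠ 0 := by
  intro h
  have := lre_pos hz
  rw [h] at this
  simp at this

lemma lS_sq {z : ℂ} (hz : Complex.abs z < 1) : lS z ^ 2 = 1 + lom z ^ 2 := by
  rw [lS, Complex.cpow_def_of_ne_zero (lone_add_ne hz), ← Complex.exp_nat_mul]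
  rw [show ((2 : ℕ) : ℂ) * (Complex.log (1 + lom z ^ 2) * (1/2)) = Complex.log (1 + lom z ^ 2) by
    ring]
  exact Complex.exp_log (lone_add_ne hz)

lemma lS_re_pos {z : ℂ} (hz : Complex.abs z < 1) : 0 < (lS z).re := by
  rw [lS, Complex.cpow_def_of_ne_zero (lone_add_ne hz), Complex.exp_re]
  apply mul_pos (Real.exp_pos _)
  have harg : |Complex.arg (1 + lom z ^ 2)| < Real.pi / 2 :=
    Complex.abs_arg_lt_pi_div_two_iff.mpr (Or.inl (lre_pos hz))
  have him : (Complex.log (1 + lom z ^ 2) * (1/2)).im = Complex.arg (1 + lom z ^ 2) / 2 := by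
    simp [Complex.mul_im, Complex.log_im]
    ring
  rw [him]
  apply Real.cos_pos_of_mem_Ioo
  constructor
  · cases abs_lt.mp harg with | intro h1 h2 => linarith
  · cases abs_lt.mp harg with | intro h1 h2 => linarith

lemma lD_re_pos {z : ℂ} (hz : Complex.abs z < 1) : 0 < (lS z + 1 - lom z).re := by
  have h1 : (lom z).re ≤ Complex.abs (lom z) := Complex.re_le_abs _
  have h2 := lom_lt hz
  have h3 := lS_re_pos hz
  simp only [Complex.sub_re, Complex.add_re, Complex.one_re]
  linarith

lemma lD_ne {z : ℂ} (hz : Complex.abs z < 1) : lS z + 1 - lom z ≠ 0 := by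
  intro h
  have := lD_re_pos hz
  rw [h] at this
  simp at this

lemma lh_id {z : ℂ} (hz : Complex.abs z < 1) : 1 + z * lh z = lom z + lS z := by
  have hD := lD_ne hz
  have hsq := lS_sq hz
  rw [lh]
  field_simp
  rw [show z * 2 * lB z = 2 * lom z by rw [lom]; ring]
  linear_combination -hsq

lemma lB_hasDeriv {z : ℂ} (hz : Complex.abs z < 1) :
    HasDerivAt lB ((1 - (6/7 : ℂ)^2) / (1 + (6/7) * z)^2) z := by
  have h := ((hasDerivAt_id z).add_const (6/7 : ℂ)).div
    (((hasDerivAt_id z).const_mul (6/7 : ℂ)).const_add 1) (lden_ne hz)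
  refine h.congr_deriv ?_
  simp only [id_eq]
  congr 1
  ring

lemma lom_hasDeriv {z : ℂ} (hz : Complex.abs z < 1) :
    HasDerivAt lom (lB z + z * ((1 - (6/7 : ℂ)^2) / (1 + (6/7) * z)^2)) z := by
  have h := (hasDerivAt_id z).mul (lB_hasDeriv hz)
  refine h.congr_deriv ?_
  simp only [id_eq]
  ring

lemma lS_hasDeriv {z : ℂ} (hz : Complex.abs z < 1) :
    HasDerivAt lS ((1/2 : ℂ) * (1 + lom z ^ 2) ^ ((1/2 : ℂ) - 1) *
      (((2:ℕ) : ℂ) * lom z ^ (2-1) * (lB z + z * ((1 - (6/7 : ℂ)^2) / (1 + (6/7) * z)^2)))) z := by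
  have hin := (((lom_hasDeriv hz).pow 2).const_add 1)
  exact hin.cpow_const (Or.inl (lre_pos hz))

lemma lh_hasDeriv {z : ℂ} (hz : Complex.abs z < 1) : ∃ d, HasDerivAt lh d z := by
  refine ⟨_, HasDerivAt.div ((lB_hasDeriv hz).const_mul 2)
    (((lS_hasDeriv hz).add_const 1).sub (lom_hasDeriv hz)) (lD_ne hz)⟩

lemma lB_zero : lB 0 = 6/7 := by simp [lB]
lemma lom_zero : lom 0 = 0 := by simp [lom]
lemma lS_zero : lS 0 = 1 := by simp [lS, lom]
lemma lh_zero : lh 0 = 6/7 := by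
  rw [lh, lB_zero, lS_zero, lom_zero]
  norm_num

lemma lh_hasDeriv0 : HasDerivAt lh (31/49 : ℂ) 0 := by
  have hz : Complex.abs (0 : ℂ) < 1 := by simp
  have h := HasDerivAt.div ((lB_hasDeriv hz).const_mul 2)
    (((lS_hasDeriv hz).add_const 1).sub (lom_hasDeriv hz)) (lD_ne hz)
  refine h.congr_deriv ?_
  simp only [Pi.sub_apply]
  rw [lB_zero, lS_zero, lom_zero]
  norm_num

def prim (G : ℂ → ℂ) (z : ℂ) : ℂ := ∫ t in (0:ℝ)..1, z * G ((t : ℂ) * z)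

lemma prim_zero (G : ℂ → ℂ) : prim G 0 = 0 := by simp [prim]

lemma prim_hasDerivAt {G : ℂ → ℂ} (hG : DifferentiableOn ℂ G (ball (0:ℂ) 1)) {z : ℂ}
    (hz : z ∈ ball (0:ℂ) 1) : HasDerivAt (prim G) (G z) z := by
  rw [mem_ball, dist_zero_right, Complex.norm_eq_abs] at hz
  set r : ℝ := (1 + Complex.abs z) / 2 with hr
  set ε : ℝ := (1 - Complex.abs z) / 2 with hε
  have habs := Complex.abs.nonneg z
  have hr1 : r < 1 := by rw [hr]; linarith
  have hεpos : 0 < ε := by rw [hε]; linarith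
  have hK : closedBall (0:ℂ) r ⊆ ball (0:ℂ) 1 := by
    intro w hw
    rw [mem_closedBall, dist_zero_right] at hw
    rw [mem_ball, dist_zero_right]
    linarith
  have hballs : ∀ x ∈ ball z ε, Complex.abs x ≤ r := by
    intro x hx
    rw [mem_ball] at hx
    calc Complex.abs x = Complex.abs (x - z + z) := by ring_nf
      _ ≤ Complex.abs (x - z) + Complex.abs z := Complex.abs.add_le _ _
      _ ≤ ε + Complex.abs z := by
          have : dist x z = Complex.abs (x - z) := by rw [Complex.dist_eq]; rfl
          linarith [hx.le.trans (le_refl ε), this ▸ hx.le]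
      _ = r := by rw [hε, hr]; ring
  have hcG : ContinuousOn G (ball (0:ℂ) 1) := hG.continuousOn
  have hcG' : ContinuousOn (deriv G) (ball (0:ℂ) 1) :=
    ((hG.analyticOnNhd isOpen_ball).deriv).continuousOn
  obtain ⟨C₁, hC₁⟩ := (isCompact_closedBall (0:ℂ) r).exists_bound_of_continuousOn
    (hcG.mono hK)
  obtain ⟨C₂, hC₂⟩ := (isCompact_closedBall (0:ℂ) r).exists_bound_of_continuousOn
    (hcG'.mono hK)
  have hmem : ∀ (t : ℝ) (x : ℂ), t ∈ Set.Icc (0:ℝ) 1 → Complex.abs x ≤ r →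
      (t : ℂ) * x ∈ ball (0:ℂ) 1 := by
    intro t x ht hx
    rw [mem_ball, dist_zero_right]
    rw [norm_eq_abs, map_mul, Complex.abs_ofReal, _root_.abs_of_nonneg ht.1]
    calc t * Complex.abs x ≤ 1 * r := by
          apply mul_le_mul ht.2 hx (Complex.abs.nonneg x) zero_le_one
      _ < 1 := by linarith
  have hmemK : ∀ (t : ℝ) (x : ℂ), t ∈ Set.Icc (0:ℝ) 1 → Complex.abs x ≤ r →
      (t : ℂ) * x ∈ closedBall (0:ℂ) r := by
    intro t x ht hx
    rw [mem_closedBall, dist_zero_right, norm_eq_abs, map_mul, Complex.abs_ofReal,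
      _root_.abs_of_nonneg ht.1]
    calc t * Complex.abs x ≤ 1 * r := by
          apply mul_le_mul ht.2 hx (Complex.abs.nonneg x) zero_le_one
      _ = r := one_mul r
  have hIoc : Set.uIoc (0:ℝ) 1 = Set.Ioc (0:ℝ) 1 := Set.uIoc_of_le zero_le_one
  have hcont : ∀ x : ℂ, Complex.abs x ≤ r →
      ContinuousOn (fun t : ℝ => x * G ((t:ℂ) * x)) (Set.Icc (0:ℝ) 1) := by
    intro x hx
    apply ContinuousOn.mul continuousOn_const
    apply hcG.comp
    · exact (Complex.continuous_ofReal.mul continuous_const).continuousOn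
    · intro t ht
      exact hmem t x ht hx
  have hcont' : ∀ x : ℂ, Complex.abs x ≤ r →
      ContinuousOn (fun t : ℝ => G ((t:ℂ) * x) + x * ((t:ℂ) * deriv G ((t:ℂ) * x)))
        (Set.Icc (0:ℝ) 1) := by
    intro x hx
    have hinner : ContinuousOn (fun t : ℝ => ((t:ℂ) * x)) (Set.Icc (0:ℝ) 1) :=
      (Complex.continuous_ofReal.mul continuous_const).continuousOn
    have hmaps : Set.MapsTo (fun t : ℝ => ((t:ℂ) * x)) (Set.Icc (0:ℝ) 1) (ball (0:ℂ) 1) :=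
      fun t ht => hmem t x ht hx
    exact (hcG.comp hinner hmaps).add (continuousOn_const.mul
      (Complex.continuous_ofReal.continuousOn.mul (hcG'.comp hinner hmaps)))
  have hzr : Complex.abs z ≤ r := by rw [hr]; linarith
  have hmeas1 : ∀ᶠ x in nhds z, MeasureTheory.AEStronglyMeasurable
      (fun t : ℝ => x * G ((t:ℂ) * x)) (MeasureTheory.volume.restrict (Set.uIoc (0:ℝ) 1)) := by
    rw [hIoc]
    filter_upwards [Metric.ball_mem_nhds z hεpos] with x hx
    exact ((hcont x (hballs x hx)).mono Set.Ioc_subset_Icc_self).aestronglyMeasurable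
      measurableSet_Ioc
  have hint1 : IntervalIntegrable (fun t : ℝ => z * G ((t:ℂ) * z)) MeasureTheory.volume 0 1 := by
    apply ContinuousOn.intervalIntegrable
    rw [Set.uIcc_of_le zero_le_one]
    exact hcont z hzr
  have hmeas2 : MeasureTheory.AEStronglyMeasurable
      (fun t : ℝ => G ((t:ℂ) * z) + z * ((t:ℂ) * deriv G ((t:ℂ) * z)))
      (MeasureTheory.volume.restrict (Set.uIoc (0:ℝ) 1)) := by
    rw [hIoc]
    exact ((hcont' z hzr).mono Set.Ioc_subset_Icc_self).aestronglyMeasurable measurableSet_Ioc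
  have hbound : ∀ᵐ t ∂(MeasureTheory.volume), t ∈ Set.uIoc (0:ℝ) 1 → ∀ x ∈ ball z ε,
      ‖G ((t:ℂ) * x) + x * ((t:ℂ) * deriv G ((t:ℂ) * x))‖ ≤ C₁ + r * C₂ := by
    apply MeasureTheory.ae_of_all
    intro t ht x hx
    rw [hIoc] at ht
    have ht' : t ∈ Set.Icc (0:ℝ) 1 := Set.Ioc_subset_Icc_self ht
    have hxr := hballs x hx
    have h1 : ‖G ((t:ℂ) * x)‖ ≤ C₁ := hC₁ _ (hmemK t x ht' hxr)
    have h2 : ‖deriv G ((t:ℂ) * x)‖ ≤ C₂ := hC₂ _ (hmemK t x ht' hxr)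
    calc ‖G ((t:ℂ) * x) + x * ((t:ℂ) * deriv G ((t:ℂ) * x))‖
        ≤ ‖G ((t:ℂ) * x)‖ + ‖x * ((t:ℂ) * deriv G ((t:ℂ) * x))‖ := norm_add_le _ _
      _ ≤ C₁ + r * C₂ := by
          apply add_le_add h1
          rw [norm_mul, norm_mul, Complex.norm_real, Real.norm_eq_abs, _root_.abs_of_nonneg ht'.1]
          have hC₂0 : (0:ℝ) ≤ C₂ := le_trans (norm_nonneg _) h2
          calc ‖x‖ * (t * ‖deriv G ((t:ℂ) * x)‖) ≤ r * (1 * C₂) := by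
                apply mul_le_mul hxr _ (mul_nonneg ht'.1 (norm_nonneg _)) (by linarith [habs])
                exact mul_le_mul ht'.2 h2 (norm_nonneg _) zero_le_one
            _ = r * C₂ := by ring
  have hbint : IntervalIntegrable (fun _ : ℝ => C₁ + r * C₂) MeasureTheory.volume 0 1 :=
    intervalIntegrable_const
  have hdiff : ∀ᵐ t ∂(MeasureTheory.volume), t ∈ Set.uIoc (0:ℝ) 1 → ∀ x ∈ ball z ε,
      HasDerivAt (fun x : ℂ => x * G ((t:ℂ) * x))
        (G ((t:ℂ) * x) + x * ((t:ℂ) * deriv G ((t:ℂ) * x))) x := by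
    apply MeasureTheory.ae_of_all
    intro t ht x hx
    rw [hIoc] at ht
    have ht' : t ∈ Set.Icc (0:ℝ) 1 := Set.Ioc_subset_Icc_self ht
    have hdG : HasDerivAt G (deriv G ((t:ℂ) * x)) ((t:ℂ) * x) :=
      (hG.differentiableAt (isOpen_ball.mem_nhds (hmem t x ht' (hballs x hx)))).hasDerivAt
    have hinner : HasDerivAt (fun y : ℂ => (t:ℂ) * y) ((t:ℂ)) x := by
      simpa using (hasDerivAt_id x).const_mul ((t:ℂ))
    have := (hasDerivAt_id x).mul ((hdG.comp x hinner))
    refine this.congr_deriv ?_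
    simp only [Function.comp_apply, Function.comp, id_eq]
    ring
  have key := intervalIntegral.hasDerivAt_integral_of_dominated_loc_of_deriv_le (Metric.ball_mem_nhds z hεpos) hmeas1
    hint1 hmeas2 hbound hbint hdiff
  have heq : (∫ t in (0:ℝ)..1, (G ((t:ℂ) * z) + z * ((t:ℂ) * deriv G ((t:ℂ) * z)))) = G z := by
    have hftc := intervalIntegral.integral_eq_sub_of_hasDerivAt
      (f := fun t : ℝ => (t : ℂ) * G ((t:ℂ) * z))
      (f' := fun t : ℝ => G ((t:ℂ) * z) + z * ((t:ℂ) * deriv G ((t:ℂ) * z)))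
      (a := 0) (b := 1) ?_ ?_
    · rw [hftc]; simp
    · intro t ht
      rw [Set.uIcc_of_le zero_le_one] at ht
      have hinner : HasDerivAt (fun w : ℂ => w * z) z (t:ℂ) := by
        simpa using (hasDerivAt_id ((t:ℂ))).mul_const z
      have hdG : HasDerivAt G (deriv G ((t:ℂ) * z)) ((t:ℂ) * z) :=
        (hG.differentiableAt (isOpen_ball.mem_nhds (hmem t z ht hzr))).hasDerivAt
      have hV := (hasDerivAt_id ((t:ℂ))).mul (hdG.comp ((t:ℂ)) hinner)
      have := hV.comp_ofReal
      refine this.congr_deriv ?_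
      simp only [Function.comp_apply, Function.comp, id_eq]
      ring
    · apply ContinuousOn.intervalIntegrable
      rw [Set.uIcc_of_le zero_le_one]
      exact hcont' z hzr
  rw [show G z = ∫ t in (0:ℝ)..1, (G ((t:ℂ) * z) + z * ((t:ℂ) * deriv G ((t:ℂ) * z)))
    from heq.symm]
  exact key.2

lemma lh_diffOn : DifferentiableOn ℂ lh (ball (0:ℂ) 1) := by
  intro z hz
  rw [mem_ball, dist_zero_right, Complex.norm_eq_abs] at hz
  obtain ⟨d, hd⟩ := lh_hasDeriv hz
  exact hd.differentiableAt.differentiableWithinAt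

def lg : ℂ → ℂ := prim lh
def lF (z : ℂ) : ℂ := Complex.exp (lg z)
def lf : ℂ → ℂ := prim lF

lemma lg_hasDeriv {z : ℂ} (hz : z ∈ ball (0:ℂ) 1) : HasDerivAt lg (lh z) z :=
  prim_hasDerivAt lh_diffOn hz

lemma lF_hasDeriv {z : ℂ} (hz : z ∈ ball (0:ℂ) 1) : HasDerivAt lF (lF z * lh z) z := by
  have := (lg_hasDeriv hz).cexp
  exact this

lemma lF_ne (z : ℂ) : lF z ≠ 0 := Complex.exp_ne_zero _

lemma lF_diffOn : DifferentiableOn ℂ lF (ball (0:ℂ) 1) := fun z hz =>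
  (lF_hasDeriv hz).differentiableAt.differentiableWithinAt

lemma lf_hasDeriv {z : ℂ} (hz : z ∈ ball (0:ℂ) 1) : HasDerivAt lf (lF z) z :=
  prim_hasDerivAt lF_diffOn hz

lemma lf_deriv_eq {z : ℂ} (hz : z ∈ ball (0:ℂ) 1) : deriv lf z = lF z :=
  (lf_hasDeriv hz).deriv

lemma lf_deriv2_eq {z : ℂ} (hz : z ∈ ball (0:ℂ) 1) :
    deriv (deriv lf) z = lF z * lh z := by
  have hev : deriv lf =ᶠ[nhds z] lF := by
    filter_upwards [isOpen_ball.mem_nhds hz] with w hw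
    exact lf_deriv_eq hw
  rw [hev.deriv_eq]
  exact (lF_hasDeriv hz).deriv

lemma lg_zero : lg 0 = 0 := prim_zero lh
lemma lF_zero : lF 0 = 1 := by rw [lF, lg_zero, Complex.exp_zero]

lemma zero_mem_ball : (0:ℂ) ∈ ball (0:ℂ) 1 := by simp

lemma lf_iter2 : iteratedDeriv 2 lf 0 = 6/7 := by
  rw [show (2:ℕ) = 1 + 1 from rfl, iteratedDeriv_succ, iteratedDeriv_one]
  rw [lf_deriv2_eq zero_mem_ball, lF_zero, lh_zero]
  norm_num

lemma lf_iter3 : iteratedDeriv 3 lf 0 = 67/49 := by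
  rw [show (3:ℕ) = 2 + 1 from rfl, iteratedDeriv_succ]
  rw [show iteratedDeriv 2 lf = deriv (deriv lf) by
    rw [show (2:ℕ) = 1 + 1 from rfl, iteratedDeriv_succ, iteratedDeriv_one]]
  have hev : deriv (deriv lf) =ᶠ[nhds (0:ℂ)] fun z => lF z * lh z := by
    filter_upwards [isOpen_ball.mem_nhds zero_mem_ball] with w hw
    exact lf_deriv2_eq hw
  rw [hev.deriv_eq]
  have hd : HasDerivAt (fun z => lF z * lh z)
      ((lF 0 * lh 0) * lh 0 + lF 0 * (31/49)) 0 :=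
    (lF_hasDeriv zero_mem_ball).mul lh_hasDeriv0
  rw [hd.deriv, lF_zero, lh_zero]
  norm_num

lemma labs_const : Complex.abs ((6:ℂ)/7) = 6/7 := by
  rw [show (6/7:ℂ) = ((6/7:ℝ):ℂ) by norm_num, Complex.abs_ofReal]
  norm_num

lemma lS_sub_one_le {z : ℂ} (hz : Complex.abs z < 1) :
    Complex.abs (lS z - 1) ≤ Complex.abs (lom z) ^ 2 := by
  have h1 : (1:ℝ) ≤ Complex.abs (lS z + 1) := by
    have := Complex.re_le_abs (lS z + 1)
    have h2 := lS_re_pos hz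
    simp only [Complex.add_re, Complex.one_re] at this
    linarith
  have h2 : Complex.abs (lS z - 1) * Complex.abs (lS z + 1) = Complex.abs (lom z) ^ 2 := by
    rw [← map_mul, ← map_pow]
    congr 1
    linear_combination lS_sq hz
  calc Complex.abs (lS z - 1) ≤ Complex.abs (lS z - 1) * Complex.abs (lS z + 1) :=
        le_mul_of_one_le_right (Complex.abs.nonneg _) h1
    _ = Complex.abs (lom z) ^ 2 := h2

lemma lh_bound {z : ℂ} (hz : Complex.abs z < 1) : Complex.abs (lh z) ≤ 1 + Complex.abs z := by
  rcases eq_or_ne z 0 with rfl | hne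
  · rw [lh_zero, labs_const]
    norm_num
  · have hpos : 0 < Complex.abs z := Complex.abs.pos hne
    have hid : z * lh z = lom z + (lS z - 1) := by
      have := lh_id hz
      linear_combination this
    have h1 : Complex.abs z * Complex.abs (lh z) ≤ Complex.abs z * (1 + Complex.abs z) := by
      rw [← map_mul, hid]
      calc Complex.abs (lom z + (lS z - 1))
          ≤ Complex.abs (lom z) + Complex.abs (lS z - 1) := Complex.abs.add_le _ _
        _ ≤ Complex.abs z + Complex.abs z ^ 2 := by
            have ha := lom_le hz
            have hb := lS_sub_one_le hz
            have hc : Complex.abs (lom z) ^ 2 ≤ Complex.abs z ^ 2 := by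
              nlinarith [Complex.abs.nonneg (lom z)]
            linarith
        _ = Complex.abs z * (1 + Complex.abs z) := by ring
    exact le_of_mul_le_mul_left h1 hpos

lemma lg_bound {z : ℂ} (hz : Complex.abs z < 1) :
    Complex.abs (lg z) ≤ Complex.abs z + Complex.abs z ^ 2 / 2 := by
  have hb : ∀ᵐ (t : ℝ) ∂(MeasureTheory.volume.restrict (Set.uIoc (0:ℝ) 1)),
      ‖z * lh ((t:ℂ) * z)‖ ≤ Complex.abs z + t * Complex.abs z ^ 2 := by
    rw [MeasureTheory.ae_restrict_iff' measurableSet_uIoc]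
    apply MeasureTheory.ae_of_all
    intro t ht
    rw [Set.uIoc_of_le zero_le_one] at ht
    have htz : Complex.abs ((t:ℂ) * z) = t * Complex.abs z := by
      rw [map_mul, Complex.abs_ofReal, _root_.abs_of_nonneg ht.1.le]
    have htz1 : Complex.abs ((t:ℂ) * z) < 1 := by
      rw [htz]
      calc t * Complex.abs z ≤ 1 * Complex.abs z := by
            apply mul_le_mul_of_nonneg_right ht.2 (Complex.abs.nonneg z)
        _ < 1 := by rw [one_mul]; exact hz
    rw [Complex.norm_eq_abs, map_mul]
    calc Complex.abs z * Complex.abs (lh ((t:ℂ) * z))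
        ≤ Complex.abs z * (1 + Complex.abs ((t:ℂ) * z)) :=
          mul_le_mul_of_nonneg_left (lh_bound htz1) (Complex.abs.nonneg z)
      _ = Complex.abs z + t * Complex.abs z ^ 2 := by rw [htz]; ring
  have hgint : IntervalIntegrable (fun t : ℝ => Complex.abs z + t * Complex.abs z ^ 2)
      MeasureTheory.volume 0 1 := by
    apply Continuous.intervalIntegrable
    continuity
  have hval : (∫ t in (0:ℝ)..1, (Complex.abs z + t * Complex.abs z ^ 2))
      = Complex.abs z + Complex.abs z ^ 2 / 2 := by
    rw [intervalIntegral.integral_add intervalIntegrable_const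
      (by apply Continuous.intervalIntegrable; continuity)]
    rw [intervalIntegral.integral_mul_const, integral_id]
    simp
    ring
  have := intervalIntegral.norm_integral_le_of_norm_le zero_le_one
    (by rw [← Set.uIoc_of_le zero_le_one]; exact (MeasureTheory.ae_restrict_iff' measurableSet_uIoc).mp hb) hgint
  rw [show lg z = ∫ t in (0:ℝ)..1, z * lh ((t:ℂ) * z) from rfl]
  rw [Complex.norm_eq_abs, hval] at this
  calc Complex.abs (∫ t in (0:ℝ)..1, z * lh ((t:ℂ) * z))
      ≤ |Complex.abs z + Complex.abs z ^ 2 / 2| := this.trans (le_abs_self _)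
    _ = Complex.abs z + Complex.abs z ^ 2 / 2 := by
        apply _root_.abs_of_nonneg
        positivity

lemma lF_re_pos {z : ℂ} (hz : Complex.abs z < 1) : 0 < (lF z).re := by
  rw [lF, Complex.exp_re]
  apply mul_pos (Real.exp_pos _)
  apply Real.cos_pos_of_mem_Ioo
  have h1 : |(lg z).im| ≤ Complex.abs (lg z) := Complex.abs_im_le_abs _
  have h2 := lg_bound hz
  have h3 : Complex.abs z + Complex.abs z ^ 2 / 2 < 3/2 := by
    nlinarith [Complex.abs.nonneg z]
  have hpi := Real.pi_gt_three
  constructor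
  · cases abs_le.mp h1 with | intro hl hr => linarith
  · cases abs_le.mp h1 with | intro hl hr => linarith

lemma lf_injOn : Set.InjOn lf (ball (0:ℂ) 1) := by
  intro z₁ h₁ z₂ h₂ heq
  by_contra hne
  set c := z₂ - z₁ with hcdef
  have hc : c ≠ 0 := sub_ne_zero.mpr (Ne.symm hne)
  have hmem : ∀ t : ℝ, t ∈ Set.Icc (0:ℝ) 1 → z₁ + (t:ℂ) * c ∈ ball (0:ℂ) 1 := by
    intro t ht
    have hcv := (convex_ball (0:ℂ) 1) h₁ h₂ (by linarith [ht.2] : (0:ℝ) ≤ 1 - t) ht.1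
      (by ring : (1 - t) + t = 1)
    have : (1 - t) • z₁ + t • z₂ = z₁ + (t:ℂ) * c := by
      rw [hcdef]
      simp only [Complex.real_smul, Complex.ofReal_sub, Complex.ofReal_one]
      ring
    rwa [this] at hcv
  have hderiv : ∀ t ∈ Set.uIcc (0:ℝ) 1,
      HasDerivAt (fun t : ℝ => lf (z₁ + (t:ℂ) * c)) (lF (z₁ + (t:ℂ) * c) * c) t := by
    intro t ht
    rw [Set.uIcc_of_le zero_le_one] at ht
    have hinner : HasDerivAt (fun w : ℂ => z₁ + w * c) c (t:ℂ) := by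
      simpa using ((hasDerivAt_id ((t:ℂ))).mul_const c).const_add z₁
    have hV := (lf_hasDeriv (hmem t ht)).comp ((t:ℂ)) hinner
    exact hV.comp_ofReal
  have hcontpath : ContinuousOn (fun t : ℝ => lF (z₁ + (t:ℂ) * c)) (Set.Icc (0:ℝ) 1) := by
    apply lF_diffOn.continuousOn.comp
    · exact (continuous_const.add (Complex.continuous_ofReal.mul continuous_const)).continuousOn
    · intro t ht
      exact hmem t ht
  have hint : IntervalIntegrable (fun t : ℝ => lF (z₁ + (t:ℂ) * c) * c)
      MeasureTheory.volume 0 1 := by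
    apply ContinuousOn.intervalIntegrable
    rw [Set.uIcc_of_le zero_le_one]
    exact hcontpath.mul continuousOn_const
  have hftc := intervalIntegral.integral_eq_sub_of_hasDerivAt hderiv hint
  simp only [Complex.ofReal_one, one_mul, Complex.ofReal_zero, zero_mul, add_zero] at hftc
  rw [show z₁ + c = z₂ by rw [hcdef]; ring, ← heq, sub_self] at hftc
  rw [intervalIntegral.integral_mul_const] at hftc
  have hI0 : (∫ t in (0:ℝ)..1, lF (z₁ + (t:ℂ) * c)) = 0 := by
    rcases mul_eq_zero.mp hftc with h | h
    · exact h
    · exact absurd h hc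
  have hre : (∫ t in (0:ℝ)..1, lF (z₁ + (t:ℂ) * c)).re
      = ∫ t in (0:ℝ)..1, (lF (z₁ + (t:ℂ) * c)).re := by
    have hci : IntervalIntegrable (fun t : ℝ => lF (z₁ + (t:ℂ) * c))
        MeasureTheory.volume 0 1 := by
      apply ContinuousOn.intervalIntegrable
      rw [Set.uIcc_of_le zero_le_one]
      exact hcontpath
    have := Complex.reCLM.intervalIntegral_comp_comm hci
    simpa using this.symm
  have hpos : 0 < ∫ t in (0:ℝ)..1, (lF (z₁ + (t:ℂ) * c)).re := by
    apply intervalIntegral.intervalIntegral_pos_of_pos_on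
    · apply ContinuousOn.intervalIntegrable
      rw [Set.uIcc_of_le zero_le_one]
      exact Complex.continuous_re.comp_continuousOn hcontpath
    · intro t ht
      apply lF_re_pos
      have := hmem t (Set.mem_Icc.mpr ⟨ht.1.le, ht.2.le⟩)
      rwa [mem_ball, dist_zero_right, Complex.norm_eq_abs] at this
    · norm_num
  rw [hI0] at hre
  simp at hre
  rw [← hre] at hpos
  exact lt_irrefl 0 hpos

lemma labs_om_w {z : ℂ} (hz : Complex.abs z < 1) :
    Complex.abs ((lom z + lS z) ^ 2 - 1) ≤ 2 * Complex.abs (lom z + lS z) := by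
  have hsq : (lom z + lS z) ^ 2 - 1 = 2 * lom z * (lom z + lS z) := by
    linear_combination lS_sq hz
  rw [hsq, map_mul, map_mul]
  have h2 : Complex.abs (2 : ℂ) = 2 := by
    rw [show (2:ℂ) = ((2:ℝ):ℂ) by norm_num, Complex.abs_ofReal]; norm_num
  rw [h2]
  have hom := (lom_le hz).trans hz.le
  calc 2 * Complex.abs (lom z) * Complex.abs (lom z + lS z)
      ≤ 2 * 1 * Complex.abs (lom z + lS z) := by
        apply mul_le_mul_of_nonneg_right _ (Complex.abs.nonneg _)
        linarith
    _ = 2 * Complex.abs (lom z + lS z) := by ring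

end LuneAux

/-- There exists a function `f` in the class `C_☾` of convex functions associated with the
lune whose first two inverse logarithmic coefficients `Γ₁ = -a₂/2` and `Γ₂ = -a₃/2 + 3a₂²/4`
satisfy `|Γ₂| - |Γ₁| = -4/21`; hence the lower bound `|Γ₂| - |Γ₁| ≥ -4/21` for `C_☾` is
sharp. -/
theorem exists_convex_lune_abs_Gamma2_sub_abs_Gamma1_eq_neg_four_div_21 :
    ∃ f : ℂ → ℂ,
      DifferentiableOn ℂ f (ball (0 : ℂ) 1) ∧
      f 0 = 0 ∧ deriv f 0 = 1 ∧
      Set.InjOn f (ball (0 : ℂ) 1) ∧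
      (∀ z ∈ ball (0 : ℂ) 1,
        deriv f z ≠ 0 ∧
        ‖(1 + z * deriv (deriv f) z / deriv f z) ^ 2 - 1‖
          ≤ 2 * ‖1 + z * deriv (deriv f) z / deriv f z‖) ∧
      ‖-(iteratedDeriv 3 f 0 / 6) / 2 + 3 * (iteratedDeriv 2 f 0 / 2) ^ 2 / 4‖
        - ‖-(iteratedDeriv 2 f 0 / 2) / 2‖ = -(4 / 21) := by
  refine ⟨lf, fun z hz => (lf_hasDeriv hz).differentiableAt.differentiableWithinAt,
    prim_zero lF, ?_, lf_injOn, ?_, ?_⟩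
  · rw [lf_deriv_eq zero_mem_ball, lF_zero]
  · intro z hz
    have hz' : Complex.abs z < 1 := by
      rwa [mem_ball, dist_zero_right, Complex.norm_eq_abs] at hz
    refine ⟨by rw [lf_deriv_eq hz]; exact lF_ne z, ?_⟩
    have hw : 1 + z * deriv (deriv lf) z / deriv lf z = lom z + lS z := by
      rw [lf_deriv_eq hz, lf_deriv2_eq hz]
      rw [show z * (lF z * lh z) / lF z = z * lh z by
        rw [mul_div_assoc]
        congr 1
        rw [mul_comm, mul_div_assoc, div_self (lF_ne z), mul_one]]
      exact lh_id hz'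
    rw [hw]
    exact labs_om_w hz'
  · rw [lf_iter2, lf_iter3]
    rw [show -((67:ℂ)/49 / 6) / 2 + 3 * ((6:ℂ)/7 / 2) ^ 2 / 4 = ((1:ℝ)/42 : ℝ) by
      push_cast; ring]
    rw [show -((6:ℂ)/7 / 2) / 2 = ((-(3/14) : ℝ) : ℂ) by push_cast; ring]
    rw [Complex.norm_real, Complex.norm_real, Real.norm_eq_abs, Real.norm_eq_abs]
    rw [_root_.abs_of_nonneg (by norm_num : (0:ℝ) ≤ 1/42),
      _root_.abs_of_nonpos (by norm_num : (-(3/14):ℝ) ≤ 0)]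
    norm_num
end

section
/- Let B₁ > 0 be real, B₂ ∈ ℂ, B₃ ∈ ℝ, and let p be in the Carathéodory class P with Taylor coefficients c₁, c₂. If |2B₂ + B₃| ≥ |B₃| + B₁, then |B₂ c₁² + B₃ c₂| − B₁ |c₁| ≤ |4B₂ + 2B₃| − 2B₁; otherwise, |B₂ c₁² + B₃ c₂| − B₁ |c₁| ≤ 2|B₃|. -/
open Complex Metric

section CaratheodoryAux
open Set

-- normSq identity for the Möbius map
lemma mobius_normSq (a w : ℂ) :
    normSq (1 - (starRingEnd ℂ) a * w) - normSq (w - a) = (1 - normSq a) * (1 - normSq w) := by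
  simp only [normSq_apply, sub_re, sub_im, mul_re, mul_im, one_re, one_im, conj_re, conj_im]
  ring

lemma halfplane_abs_lt {w : ℂ} (h : 0 < w.re) :
    ‖w - 1‖ < ‖w + 1‖ := by
  have h2 : (‖w - 1‖)^2 < (‖w + 1‖)^2 := by
    rw [Complex.sq_norm, Complex.sq_norm]
    simp only [normSq_apply, sub_re, sub_im, add_re, add_im, one_re, one_im]
    nlinarith
  exact lt_of_pow_lt_pow_left₀ 2 (norm_nonneg _) h2

lemma carath_coeff (p : ℂ → ℂ)
    (hp : DifferentiableOn ℂ p (ball (0 : ℂ) 1))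
    (hp0 : p 0 = 1)
    (hpre : ∀ z ∈ ball (0 : ℂ) 1, 0 < (p z).re)
    (c₁ c₂ : ℂ)
    (hc₁ : c₁ = deriv p 0)
    (hc₂ : c₂ = iteratedDeriv 2 p 0 / 2) :
    ‖c₁‖ ≤ 2 ∧ ‖c₂ - c₁^2/2‖ ≤ 2 - (‖c₁‖)^2/2 := by
  have h0 : (0 : ℂ) ∈ ball (0 : ℂ) 1 := by simp
  have hball : IsOpen (ball (0:ℂ) 1) := isOpen_ball
  have pnz : ∀ z ∈ ball (0:ℂ) 1, p z + 1 ≠ 0 := by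
    intro z hz h
    have := hpre z hz
    have : (p z + 1).re = (p z).re + 1 := by simp
    rw [h] at this
    simp at this
    linarith [hpre z hz]
  -- the Möbius transform
  set ω : ℂ → ℂ := fun z => (p z - 1) / (p z + 1) with hωdef
  have hω0 : ω 0 = 0 := by simp [hωdef, hp0]
  have hωd : DifferentiableOn ℂ ω (ball (0:ℂ) 1) :=
    ((hp.sub (differentiableOn_const 1)).div (hp.add (differentiableOn_const 1)) pnz)
  have hmaps : MapsTo ω (ball (0:ℂ) 1) (ball (0:ℂ) 1) := by
    intro z hz
    rw [mem_ball_zero_iff]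
    have hlt := halfplane_abs_lt (hpre z hz)
    have hpos : 0 < ‖p z + 1‖ := norm_pos_iff.mpr (pnz z hz)
    calc ‖ω z‖ = ‖p z - 1‖ / ‖p z + 1‖ := by
            simp [hωdef, map_div₀]
      _ < 1 := (div_lt_one hpos).mpr hlt
  set g : ℂ → ℂ := dslope ω 0 with hgdef
  have hωg : ∀ z, ω z = z * g z := by
    intro z
    have := sub_smul_dslope ω 0 z
    rw [hω0] at this
    simpa [smul_eq_mul] using this.symm
  have hgd : DifferentiableOn ℂ g (ball (0:ℂ) 1) :=
    (differentiableOn_dslope (ball_mem_nhds _ one_pos)).mpr hωd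
  have hgbound : ∀ z ∈ ball (0:ℂ) 1, ‖g z‖ ≤ 1 := by
    intro z hz
    have := Complex.norm_dslope_le_div_of_mapsTo_ball hωd (by rw [hω0]; exact hmaps.mono_right ball_subset_closedBall) hz
    simpa using this
  -- analyticity
  have hpa : AnalyticOnNhd ℂ p (ball (0:ℂ) 1) := hp.analyticOnNhd isOpen_ball
  have hωa : AnalyticAt ℂ ω 0 :=
    ((hpa 0 h0).sub analyticAt_const).div ((hpa 0 h0).add analyticAt_const) (by simp [hp0])
  obtain ⟨q, hq⟩ := hωa
  have hga : AnalyticAt ℂ g 0 := ⟨_, hq.has_fpower_series_dslope_fslope⟩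
  -- first derivative of ω at 0
  have hpd0 : HasDerivAt p c₁ 0 := by
    rw [hc₁]; exact (hp.differentiableAt (hball.mem_nhds h0)).hasDerivAt
  have hω'0 : HasDerivAt ω (c₁ / 2) 0 := by
    have := (hpd0.sub_const 1).div (hpd0.add_const 1) (by simp [hp0])
    convert (show HasDerivAt ω _ 0 from this) using 1
    rw [hp0]; ring_nf
  have ha : g 0 = c₁ / 2 := by rw [hgdef, dslope_same, hω'0.deriv]
  -- second derivative of p
  have hdpa : AnalyticOnNhd ℂ (deriv p) (ball (0:ℂ) 1) := hpa.deriv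
  have hdp0 : HasDerivAt (deriv p) (2 * c₂) 0 := by
    have hD : DifferentiableAt ℂ (deriv p) 0 := (hdpa 0 h0).differentiableAt
    have : deriv (deriv p) 0 = 2 * c₂ := by
      rw [hc₂, iteratedDeriv_succ, iteratedDeriv_one]; ring
    rw [← this]; exact hD.hasDerivAt
  -- deriv ω on the ball (formula F)
  have hderivω : ∀ z ∈ ball (0:ℂ) 1, deriv ω z = 2 * deriv p z / (p z + 1)^2 := by
    intro z hz
    have hpz : HasDerivAt p (deriv p z) z :=
      (hp.differentiableAt (hball.mem_nhds hz)).hasDerivAt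
    have h := (hpz.sub_const 1).div (hpz.add_const 1) (pnz z hz)
    rw [(show HasDerivAt ω _ z from h).deriv]
    have h4 : (p z + 1) ≠ 0 := pnz z hz
    field_simp
    ring
  have hF0 : HasDerivAt (fun z => 2 * deriv p z / (p z + 1)^2) (c₂ - c₁^2/2) 0 := by
    have hnum : HasDerivAt (fun z => 2 * deriv p z) (2 * (2 * c₂)) 0 := hdp0.const_mul 2
    have hden : HasDerivAt (fun z => (p z + 1)^2) (2 * (p 0 + 1)^1 * c₁) 0 :=
      (hpd0.add_const 1).pow 2
    have h := hnum.div hden (by rw [hp0]; norm_num)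
    convert (show HasDerivAt (fun z => 2 * deriv p z / (p z + 1)^2) _ 0 from h) using 1
    rw [hpd0.deriv, hp0]
    ring_nf
  have hωFD : deriv ω =ᶠ[nhds (0:ℂ)] (fun z => 2 * deriv p z / (p z + 1)^2) :=
    Filter.eventuallyEq_of_mem (hball.mem_nhds h0) hderivω
  have hd2A : deriv (deriv ω) 0 = c₂ - c₁^2/2 := by
    rw [hωFD.deriv_eq, hF0.deriv]
  -- deriv ω via g (formula G)
  have hderivωg : ∀ z ∈ ball (0:ℂ) 1, deriv ω z = g z + z * deriv g z := by
    intro z hz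
    have hgz : DifferentiableAt ℂ g z := hgd.differentiableAt (hball.mem_nhds hz)
    have h : HasDerivAt (fun w => w * g w) (1 * g z + z * deriv g z) z :=
      (hasDerivAt_id z).mul hgz.hasDerivAt
    have : HasDerivAt ω (1 * g z + z * deriv g z) z := by
      have : ω = fun w => w * g w := funext hωg
      rw [this]; exact h
    rw [this.deriv]; ring
  have hG0 : HasDerivAt (fun z => g z + z * deriv g z) (2 * deriv g 0) 0 := by
    have h1 : HasDerivAt g (deriv g 0) 0 := hga.differentiableAt.hasDerivAt
    have hgnhd : AnalyticOnNhd ℂ g (ball (0:ℂ) 1) := hgd.analyticOnNhd isOpen_ball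
    have h2 : HasDerivAt (deriv g) (deriv (deriv g) 0) 0 :=
      (hgnhd.deriv 0 h0).differentiableAt.hasDerivAt
    have h := h1.add ((hasDerivAt_id 0).mul h2)
    convert (show HasDerivAt (fun z => g z + z * deriv g z) _ 0 from h) using 1
    simp only [id_eq]
    ring
  have hωGD : deriv ω =ᶠ[nhds (0:ℂ)] (fun z => g z + z * deriv g z) :=
    Filter.eventuallyEq_of_mem (hball.mem_nhds h0) hderivωg
  have hd2B : deriv (deriv ω) 0 = 2 * deriv g 0 := by
    rw [hωGD.deriv_eq, hG0.deriv]
  have hb : deriv g 0 = (c₂ - c₁^2/2) / 2 := by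
    rw [← hd2A, hd2B]; ring
  -- Schwarz-Pick at 0
  have ha1 : ‖g 0‖ ≤ 1 := hgbound 0 h0
  have key : ‖deriv g 0‖ ≤ 1 - (‖g 0‖)^2 := by
    by_cases hcase : ∀ z ∈ ball (0:ℂ) 1, ‖g z‖ < 1
    · -- strict case: Möbius trick
      set a : ℂ := g 0 with hadef
      have haa : ‖a‖ < 1 := hcase 0 h0
      have hden : ∀ z ∈ ball (0:ℂ) 1, (1 : ℂ) - (starRingEnd ℂ) a * g z ≠ 0 := by
        intro z hz h
        have h1 : (1:ℂ) = (starRingEnd ℂ) a * g z := by linear_combination h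
        have : (1:ℝ) = ‖(starRingEnd ℂ) a * g z‖ := by rw [← h1]; simp
        rw [norm_mul, Complex.norm_conj] at this
        nlinarith [hgbound z hz, norm_nonneg a, norm_nonneg (g z)]
      set h : ℂ → ℂ := fun z => (g z - a) / (1 - (starRingEnd ℂ) a * g z) with hhdef
      have hh0 : h 0 = 0 := by simp [hhdef, hadef]
      have hhd : DifferentiableOn ℂ h (ball (0:ℂ) 1) :=
        ((hgd.sub (differentiableOn_const a)).div
          ((differentiableOn_const 1).sub ((differentiableOn_const _).mul hgd)) hden)
      have hhmaps : MapsTo h (ball (0:ℂ) 1) (ball (0:ℂ) 1) := by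
        intro z hz
        rw [mem_ball_zero_iff]
        have hid := mobius_normSq a (g z)
        have h1 : normSq (g z) < 1 := by
          have := hcase z hz
          rw [← Complex.sq_norm]; nlinarith [norm_nonneg (g z)]
        have h2 : normSq a < 1 := by
          rw [← Complex.sq_norm]; nlinarith [norm_nonneg a]
        have hlt : normSq (g z - a) < normSq (1 - (starRingEnd ℂ) a * g z) := by nlinarith
        have habslt : ‖g z - a‖ < ‖1 - (starRingEnd ℂ) a * g z‖ := by
          have e1 := Complex.sq_norm (g z - a)
          have e2 := Complex.sq_norm (1 - (starRingEnd ℂ) a * g z)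
          refine lt_of_pow_lt_pow_left₀ 2 (norm_nonneg _) ?_
          rw [e1, e2]; exact hlt
        have hpos : 0 < ‖1 - (starRingEnd ℂ) a * g z‖ :=
          norm_pos_iff.mpr (hden z hz)
        calc ‖h z‖ = ‖g z - a‖ / ‖1 - (starRingEnd ℂ) a * g z‖ := by
              simp [hhdef, map_div₀]
          _ < 1 := (div_lt_one hpos).mpr habslt
      have hschwarz : ‖deriv h 0‖ ≤ 1 :=
        Complex.norm_deriv_le_one_of_mapsTo_ball hhd (by rw [hh0]; exact hhmaps.mono_right ball_subset_closedBall) one_pos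
      -- compute deriv h 0
      set t : ℝ := 1 - normSq a with htdef
      have ht : 0 < t := by
        have : normSq a < 1 := by rw [← Complex.sq_norm]; nlinarith [norm_nonneg a]
        simp [htdef]; linarith
      have hgd0 : HasDerivAt g (deriv g 0) 0 := hga.differentiableAt.hasDerivAt
      have hu : HasDerivAt (fun z => g z - a) (deriv g 0) 0 := hgd0.sub_const a
      have hv : HasDerivAt (fun z => (1:ℂ) - (starRingEnd ℂ) a * g z)
          (-((starRingEnd ℂ) a * deriv g 0)) 0 := by
        have := (hgd0.const_mul ((starRingEnd ℂ) a)).const_sub 1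
        convert this using 1
      have hdh : HasDerivAt h (deriv g 0 / (t:ℂ)) 0 := by
        have hv0 : (1:ℂ) - (starRingEnd ℂ) a * g 0 = (t:ℂ) := by
          rw [htdef, ← hadef]
          push_cast
          rw [← Complex.normSq_eq_conj_mul_self]
        have h := hu.div hv (by rw [hv0]; exact_mod_cast ne_of_gt ht)
        have htne : (t:ℂ) ≠ 0 := by exact_mod_cast ne_of_gt ht
        convert (show HasDerivAt (fun z => (g z - a) / (1 - (starRingEnd ℂ) a * g z)) _ 0 from h) using 1
        rw [hv0, ← hadef, sub_self, zero_mul, sub_zero, pow_two]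
        field_simp
      rw [hdh.deriv] at hschwarz
      rw [norm_div, Complex.norm_of_nonneg ht.le, div_le_one ht] at hschwarz
      have : (‖g 0‖)^2 = normSq a := by rw [← hadef, Complex.sq_norm]
      linarith
    · -- max modulus case: g is constant
      push_neg at hcase
      obtain ⟨z₀, hz₀, hz₀1⟩ := hcase
      have heq1 : ‖g z₀‖ = 1 := le_antisymm (hgbound z₀ hz₀) hz₀1
      have hmax : IsMaxOn (norm ∘ g) (ball (0:ℂ) 1) z₀ := by
        intro z hz
        simp only [Function.comp_apply, Set.mem_setOf_eq]
        rw [show ‖g z₀‖ = 1 from heq1]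
        exact hgbound z hz
      have hconst : EqOn g (Function.const ℂ (g z₀)) (ball (0:ℂ) 1) :=
        Complex.eqOn_of_isPreconnected_of_isMaxOn_norm (convex_ball (0:ℂ) 1).isPreconnected
          isOpen_ball hgd hz₀ hmax
      have hg00 : g 0 = g z₀ := hconst h0
      have hder0 : deriv g 0 = 0 := by
        have hev : g =ᶠ[nhds (0:ℂ)] Function.const ℂ (g z₀) :=
          Filter.eventuallyEq_of_mem (hball.mem_nhds h0) hconst
        rw [hev.deriv_eq]
        exact deriv_const 0 (g z₀)
      rw [hder0, hg00, heq1]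
      simp
  constructor
  · rw [ha] at ha1
    rw [norm_div] at ha1
    simp at ha1
    linarith [ha1]
  · rw [ha] at key
    rw [hb] at key
    rw [norm_div, norm_div] at key
    simp only [Complex.norm_two] at key
    have h1 : ‖c₁‖ / 2 ≤ 1 := by
      rw [ha, norm_div] at ha1; simpa using ha1
    nlinarith [norm_nonneg c₁, norm_nonneg (c₂ - c₁^2/2)]

end CaratheodoryAux

open Set in
/-- Let `B₁ > 0` be real, `B₂ ∈ ℂ`, `B₃ ∈ ℝ`, and let `p` be in the Carathéodory class `P`
with Taylor coefficients `c₁, c₂`. If `|2B₂ + B₃| ≥ |B₃| + B₁`, then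
`|B₂ c₁² + B₃ c₂| - B₁|c₁| ≤ |4B₂ + 2B₃| - 2B₁`; otherwise
`|B₂ c₁² + B₃ c₂| - B₁|c₁| ≤ 2|B₃|`. -/
theorem caratheodory_psi_plus_bound
    (B₁ B₃ : ℝ) (B₂ : ℂ) (hB₁ : 0 < B₁)
    (p : ℂ → ℂ)
    (hp : DifferentiableOn ℂ p (ball (0 : ℂ) 1))
    (hp0 : p 0 = 1)
    (hpre : ∀ z ∈ ball (0 : ℂ) 1, 0 < (p z).re)
    (c₁ c₂ : ℂ)
    (hc₁ : c₁ = deriv p 0)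
    (hc₂ : c₂ = iteratedDeriv 2 p 0 / 2) :
    (‖2 * B₂ + (B₃ : ℂ)‖ ≥ |B₃| + B₁ →
      ‖B₂ * c₁ ^ 2 + (B₃ : ℂ) * c₂‖ - B₁ * ‖c₁‖
        ≤ ‖4 * B₂ + 2 * (B₃ : ℂ)‖ - 2 * B₁) ∧
    (‖2 * B₂ + (B₃ : ℂ)‖ < |B₃| + B₁ →
      ‖B₂ * c₁ ^ 2 + (B₃ : ℂ) * c₂‖ - B₁ * ‖c₁‖
        ≤ 2 * |B₃|) := by
  obtain ⟨hx2, hkey⟩ := carath_coeff p hp hp0 hpre c₁ c₂ hc₁ hc₂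
  set x : ℝ := ‖c₁‖ with hxdef
  have hx0 : 0 ≤ x := norm_nonneg c₁
  set A : ℝ := ‖2 * B₂ + (B₃ : ℂ)‖ with hAdef
  set bb : ℝ := |B₃| with hbbdef
  have hbb0 : 0 ≤ bb := abs_nonneg B₃
  have hA0 : 0 ≤ A := norm_nonneg _
  -- |4B₂ + 2B₃| = 2A
  have h2A : ‖4 * B₂ + 2 * (B₃ : ℂ)‖ = 2 * A := by
    rw [hAdef, show (4 : ℂ) * B₂ + 2 * (B₃ : ℂ) = 2 * (2 * B₂ + (B₃ : ℂ)) by ring,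
      norm_mul, Complex.norm_two]
  -- main triangle estimate
  have hmain : ‖B₂ * c₁ ^ 2 + (B₃ : ℂ) * c₂‖
      ≤ (A / 2) * x ^ 2 + bb * (2 - x ^ 2 / 2) := by
    have hsplit : B₂ * c₁ ^ 2 + (B₃ : ℂ) * c₂
        = (B₂ + (B₃ : ℂ) / 2) * c₁ ^ 2 + (B₃ : ℂ) * (c₂ - c₁ ^ 2 / 2) := by ring
    have habs : ‖B₂ + (B₃ : ℂ) / 2‖ = A / 2 := by
      rw [hAdef, show (2 : ℂ) * B₂ + (B₃ : ℂ) = 2 * (B₂ + (B₃ : ℂ) / 2) by ring,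
        norm_mul, Complex.norm_two]
      ring
    calc ‖B₂ * c₁ ^ 2 + (B₃ : ℂ) * c₂‖
        ≤ ‖(B₂ + (B₃ : ℂ) / 2) * c₁ ^ 2‖
          + ‖(B₃ : ℂ) * (c₂ - c₁ ^ 2 / 2)‖ := by
          rw [hsplit]; exact norm_add_le _ _
      _ = (A / 2) * x ^ 2 + bb * ‖c₂ - c₁ ^ 2 / 2‖ := by
          rw [norm_mul, norm_mul, norm_pow, habs, Complex.norm_real, Real.norm_eq_abs, hbbdef]
      _ ≤ (A / 2) * x ^ 2 + bb * (2 - x ^ 2 / 2) := by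
          have := mul_le_mul_of_nonneg_left hkey hbb0
          linarith
  constructor
  · intro hge
    rw [h2A]
    nlinarith [mul_nonneg (sub_nonneg.mpr hx2)
      (sub_nonneg.mpr (show B₁ ≤ (A - bb) * (2 + x) / 2 by nlinarith))]
  · intro hlt
    rcases le_or_gt A bb with hAb | hAb
    · nlinarith
    · nlinarith [mul_nonneg hx0 (sub_nonneg.mpr hx2), mul_nonneg hx0 hx0]
end

section
/- Let B₁ > 0 be real, B₂ ∈ ℂ, B₃ ∈ ℝ, let p be in the Carathéodory class P with Taylor coefficients c₁, c₂, and set B₄ = |4B₂ + 2B₃| and Ψ₋ = B₁|c₁| − |B₂ c₁² + B₃ c₂|. Then: if B₁ ≥ B₄ + 2|B₃|, Ψ₋ ≤ 2B₁ − B₄; if B₁² ≤ 2|B₃|(B₄ + 2|B₃|), Ψ₋ ≤ 2B₁ √(2|B₃|/(B₄ + 2|B₃|)); and otherwise Ψ₋ ≤ 2|B₃| + B₁²/(B₄ + 2|B₃|). -/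
open Complex Metric Set


lemma schwarz_pick_zero (g : ℂ → ℂ) (hg : DifferentiableOn ℂ g (ball (0:ℂ) 1))
    (hb : ∀ z ∈ ball (0:ℂ) 1, ‖g z‖ ≤ 1) :
    ‖deriv g 0‖ ≤ 1 - ‖g 0‖ ^ 2 := by
  have h01 : (0:ℂ) ∈ ball (0:ℂ) 1 := by simp
  by_cases hlt : ∀ z ∈ ball (0:ℂ) 1, ‖g z‖ < 1
  · set a := g 0 with ha_def
    have ha : ‖a‖ < 1 := hlt 0 h01
    have hne : ∀ z ∈ ball (0:ℂ) 1, (1 : ℂ) - (starRingEnd ℂ) a * g z ≠ 0 := by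
      intro z hz
      have h1 : ‖(starRingEnd ℂ) a * g z‖ < 1 := by
        rw [norm_mul, RCLike.norm_conj]
        calc ‖a‖ * ‖g z‖ ≤ 1 * ‖g z‖ := by
              exact mul_le_mul_of_nonneg_right ha.le (norm_nonneg _)
          _ = ‖g z‖ := one_mul _
          _ < 1 := hlt z hz
      intro h
      rw [sub_eq_zero] at h
      rw [← h] at h1
      simp at h1
    set ψ : ℂ → ℂ := fun z => (g z - a) / (1 - (starRingEnd ℂ) a * g z) with hψ_def
    have hψdiff : DifferentiableOn ℂ ψ (ball (0:ℂ) 1) := by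
      exact (hg.sub (differentiableOn_const a)).div
        ((differentiableOn_const 1).sub ((differentiableOn_const _).mul hg)) hne
    have key : ∀ u : ℂ, Complex.normSq (1 - (starRingEnd ℂ) a * u) - Complex.normSq (u - a)
        = (1 - Complex.normSq a) * (1 - Complex.normSq u) := by
      intro u
      simp only [Complex.normSq_apply, Complex.sub_re, Complex.sub_im, Complex.mul_re,
        Complex.mul_im, Complex.one_re, Complex.one_im, Complex.conj_re, Complex.conj_im]
      ring
    have hψ0 : ψ 0 = 0 := by simp [hψ_def, ha_def]
    have hmaps : MapsTo ψ (ball (0:ℂ) 1) (ball (ψ 0) 1) := by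
      intro z hz
      rw [hψ0, mem_ball, dist_zero_right, hψ_def]
      have hd := hne z hz
      rw [norm_div, div_lt_one (norm_pos_iff.2 hd)]
      have h1 : Complex.normSq (g z - a) < Complex.normSq (1 - (starRingEnd ℂ) a * g z) := by
        have := key (g z)
        nlinarith [Complex.normSq_nonneg a, Complex.normSq_nonneg (g z),
          (by rw [← Complex.sq_norm]; nlinarith [hlt z hz, norm_nonneg (g z)] :
            Complex.normSq (g z) < 1),
          (by rw [← Complex.sq_norm]; nlinarith [ha, norm_nonneg a] :
            Complex.normSq a < 1)]
      calc ‖g z - a‖ = Real.sqrt (Complex.normSq (g z - a)) := by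
            rw [Complex.norm_def]
        _ < Real.sqrt (Complex.normSq (1 - (starRingEnd ℂ) a * g z)) :=
            Real.sqrt_lt_sqrt (Complex.normSq_nonneg _) h1
        _ = ‖1 - (starRingEnd ℂ) a * g z‖ := by rw [Complex.norm_def]
    have hSch : ‖dslope ψ 0 0‖ ≤ 1 / 1 :=
      norm_dslope_le_div_of_mapsTo_ball hψdiff (hmaps.mono_right ball_subset_closedBall) h01
    rw [dslope_same] at hSch
    -- compute deriv ψ 0
    have hgd : HasDerivAt g (deriv g 0) 0 :=
      (hg.differentiableAt (isOpen_ball.mem_nhds h01)).hasDerivAt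
    have hnum : HasDerivAt (fun z => g z - a) (deriv g 0) 0 := hgd.sub_const a
    have hden : HasDerivAt (fun z => (1:ℂ) - (starRingEnd ℂ) a * g z)
        (-((starRingEnd ℂ) a * deriv g 0)) 0 := (hgd.const_mul _).const_sub 1
    have hψd : HasDerivAt ψ ((deriv g 0 * (1 - (starRingEnd ℂ) a * a) -
        (a - a) * -((starRingEnd ℂ) a * deriv g 0)) / (1 - (starRingEnd ℂ) a * a) ^ 2) 0 := by
      exact hnum.div hden (hne 0 h01)
    have hval : (1:ℂ) - (starRingEnd ℂ) a * a = ((1 - Complex.normSq a : ℝ) : ℂ) := by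
      rw [mul_comm, Complex.mul_conj]
      push_cast
      ring
    have hnsq : Complex.normSq a < 1 := by
      rw [← Complex.sq_norm]; nlinarith [norm_nonneg a]
    have hden0 : (1:ℂ) - (starRingEnd ℂ) a * a ≠ 0 := by simpa [ha_def] using hne 0 h01
    have : deriv ψ 0 = deriv g 0 / (1 - (starRingEnd ℂ) a * a) := by
      rw [hψd.deriv]
      field_simp
      ring
    rw [this, norm_div, hval, Complex.norm_real,
      Real.norm_of_nonneg (by linarith)] at hSch
    norm_num at hSch
    have : ‖deriv g 0‖ ≤ 1 - Complex.normSq a := by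
      rw [div_le_one (by linarith : (0:ℝ) < 1 - Complex.normSq a)] at hSch
      linarith [hSch]
    calc ‖deriv g 0‖ ≤ 1 - Complex.normSq a := this
      _ = 1 - ‖g 0‖ ^ 2 := by rw [← Complex.sq_norm, ha_def]
  · push_neg at hlt
    obtain ⟨z₀, hz₀, hz₀1⟩ := hlt
    have heq : ‖g z₀‖ = 1 := le_antisymm (hb z₀ hz₀) hz₀1
    have hmax : IsMaxOn (norm ∘ g) (ball (0:ℂ) 1) z₀ := by
      intro x hx
      simp only [Function.comp_apply, Set.mem_setOf_eq, heq]
      exact hb x hx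
    have hconst := eqOn_of_isPreconnected_of_isMaxOn_norm
      (convex_ball (0:ℂ) 1).isPreconnected isOpen_ball hg hz₀ hmax
    have hev : g =ᶠ[nhds (0:ℂ)] fun _ => g z₀ :=
      Filter.eventuallyEq_of_mem (isOpen_ball.mem_nhds h01) hconst
    have hder : deriv g 0 = 0 := by
      rw [hev.deriv_eq]; simp
    have hg0 : g 0 = g z₀ := hconst h01
    rw [hder, hg0, norm_zero, heq]
    norm_num


lemma caratheodory_coeff_bounds (p : ℂ → ℂ)
    (hp : DifferentiableOn ℂ p (ball (0:ℂ) 1)) (hp0 : p 0 = 1)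
    (hpre : ∀ z ∈ ball (0:ℂ) 1, 0 < (p z).re) :
    ‖deriv p 0‖ ≤ 2 ∧
      ‖iteratedDeriv 2 p 0 / 2 - (deriv p 0) ^ 2 / 2‖ ≤ 2 - ‖deriv p 0‖ ^ 2 / 2 := by
  have h01 : (0:ℂ) ∈ ball (0:ℂ) 1 := by simp
  have hne : ∀ z ∈ ball (0:ℂ) 1, p z + 1 ≠ 0 := by
    intro z hz h
    have := hpre z hz
    have : (p z + 1).re = (p z).re + 1 := by simp
    rw [h] at this
    simp at this
    linarith [hpre z hz]
  set ω : ℂ → ℂ := fun z => (p z - 1) / (p z + 1) with hω_def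
  have hωdiff : DifferentiableOn ℂ ω (ball (0:ℂ) 1) :=
    (hp.sub (differentiableOn_const 1)).div (hp.add (differentiableOn_const 1)) hne
  have hω0 : ω 0 = 0 := by simp [hω_def, hp0]
  have hωlt : ∀ z ∈ ball (0:ℂ) 1, ‖ω z‖ < 1 := by
    intro z hz
    have key : Complex.normSq (p z + 1) - Complex.normSq (p z - 1) = 4 * (p z).re := by
      simp only [Complex.normSq_apply, Complex.add_re, Complex.add_im, Complex.sub_re,
        Complex.sub_im, Complex.one_re, Complex.one_im]
      ring
    have h1 : Complex.normSq (p z - 1) < Complex.normSq (p z + 1) := by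
      have := hpre z hz; linarith
    rw [hω_def]
    simp only
    rw [norm_div, div_lt_one (norm_pos_iff.2 (hne z hz))]
    calc ‖p z - 1‖ = Real.sqrt (Complex.normSq (p z - 1)) := by
          rw [Complex.norm_def]
      _ < Real.sqrt (Complex.normSq (p z + 1)) :=
          Real.sqrt_lt_sqrt (Complex.normSq_nonneg _) h1
      _ = ‖p z + 1‖ := by rw [Complex.norm_def]
  -- derivative computations
  have hpd : HasDerivAt p (deriv p 0) 0 :=
    (hp.differentiableAt (isOpen_ball.mem_nhds h01)).hasDerivAt
  set d1 := deriv p 0 with hd1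
  -- first derivative of ω at 0
  have hω'0 : HasDerivAt ω (d1 / 2) 0 := by
    have h := (hpd.sub_const 1).div (hpd.add_const 1) (by rw [hp0]; norm_num)
    exact h.congr_deriv (by rw [hp0]; ring)
  -- φ = dslope ω 0
  set φ := dslope ω 0 with hφ_def
  have hφdiff : DifferentiableOn ℂ φ (ball (0:ℂ) 1) :=
    (differentiableOn_dslope (isOpen_ball.mem_nhds h01)).mpr hωdiff
  have hmaps : MapsTo ω (ball (0:ℂ) 1) (ball (ω 0) 1) := by
    intro z hz; rw [hω0, mem_ball, dist_zero_right]; exact hωlt z hz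
  have hφle : ∀ z ∈ ball (0:ℂ) 1, ‖φ z‖ ≤ 1 := by
    intro z hz
    have := norm_dslope_le_div_of_mapsTo_ball hωdiff (hmaps.mono_right ball_subset_closedBall) hz
    simpa using this
  have hφ0 : φ 0 = d1 / 2 := by rw [hφ_def, dslope_same, hω'0.deriv]
  have hc1le : ‖d1‖ ≤ 2 := by
    have := hφle 0 h01
    rw [hφ0] at this
    rw [norm_div] at this
    simp at this
    rw [div_le_one (by norm_num : (0:ℝ) < 2)] at this
    exact this
  -- Schwarz-Pick on φ
  have hSP : ‖deriv φ 0‖ ≤ 1 - ‖φ 0‖ ^ 2 := schwarz_pick_zero φ hφdiff hφle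
  -- power series of ω at 0
  obtain ⟨q, hq⟩ := (hωdiff.analyticOnNhd isOpen_ball 0 h01)
  have hφq : HasFPowerSeriesAt φ q.fslope 0 := hq.has_fpower_series_dslope_fslope
  have hderφ : deriv φ 0 = q.coeff 2 := by
    rw [hφq.deriv]
    have : (q.fslope 1 fun _ => 1) = q.fslope.coeff 1 := rfl
    rw [this, FormalMultilinearSeries.coeff_fslope]
  -- iteratedDeriv 2 ω 0 = 2 * q.coeff 2
  obtain ⟨r, hr⟩ := hq
  have hfact := hr.factorial_smul (1:ℂ) 2
  have hitω : iteratedDeriv 2 ω 0 = 2 * q.coeff 2 := by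
    rw [iteratedDeriv_eq_iteratedFDeriv, ← hfact]
    have : (q 2 fun _ => 1) = q.coeff 2 := rfl
    rw [this]
    simp [Nat.factorial]
  -- compute iteratedDeriv 2 ω 0 from p
  have hdp_an : AnalyticOnNhd ℂ (deriv p) (ball (0:ℂ) 1) :=
    (hp.analyticOnNhd isOpen_ball).deriv
  have hdp_diff : DifferentiableAt ℂ (deriv p) 0 :=
    (hdp_an 0 h01).differentiableAt
  have hppd : HasDerivAt (deriv p) (iteratedDeriv 2 p 0) 0 := by
    have : iteratedDeriv 2 p 0 = deriv (deriv p) 0 := by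
      rw [iteratedDeriv_succ, iteratedDeriv_one]
    rw [this]
    exact hdp_diff.hasDerivAt
  set d2 := iteratedDeriv 2 p 0 with hd2
  -- deriv ω agrees with explicit formula on ball
  have hωd_eq : Set.EqOn (deriv ω) (fun z => 2 * deriv p z / (p z + 1) ^ 2)
      (ball (0:ℂ) 1) := by
    intro z hz
    have hpz : HasDerivAt p (deriv p z) z :=
      (hp.differentiableAt (isOpen_ball.mem_nhds hz)).hasDerivAt
    have h := (hpz.sub_const 1).div (hpz.add_const 1) (hne z hz)
    rw [show deriv ω z = _ from h.deriv]
    have hpz1 : p z + 1 ≠ 0 := hne z hz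
    field_simp
    ring
  have hωd_ev : deriv ω =ᶠ[nhds (0:ℂ)] fun z => 2 * deriv p z / (p z + 1) ^ 2 :=
    Filter.eventuallyEq_of_mem (isOpen_ball.mem_nhds h01) hωd_eq
  have hitω2 : iteratedDeriv 2 ω 0 = d2 / 2 - d1 ^ 2 / 2 := by
    rw [iteratedDeriv_succ, iteratedDeriv_one]
    rw [hωd_ev.deriv_eq]
    have hnum : HasDerivAt (fun z => 2 * deriv p z) (2 * d2) 0 := hppd.const_mul 2
    have hden : HasDerivAt (fun z => (p z + 1) ^ 2) (2 * (p 0 + 1) ^ 1 * d1) 0 :=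
      (hpd.add_const 1).pow 2
    have hden0 : (p 0 + 1) ^ 2 ≠ 0 := by rw [hp0]; norm_num
    have h := hnum.div hden hden0
    rw [show deriv (fun z => 2 * deriv p z / (p z + 1) ^ 2) 0 = _ from h.deriv, hp0]
    have h2 : (1:ℂ) + 1 = 2 := by norm_num
    field_simp
    ring
  have hcoeff2 : q.coeff 2 = (d2 / 2 - d1 ^ 2 / 2) / 2 := by
    linear_combination (hitω.symm.trans hitω2) / 2
  refine ⟨hc1le, ?_⟩
  have : ‖q.coeff 2‖ ≤ 1 - ‖d1 / 2‖ ^ 2 := by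
    rw [← hderφ, ← hφ0]; exact hSP
  rw [hcoeff2] at this
  have hrw : ‖(d2 / 2 - d1 ^ 2 / 2) / 2‖ = ‖d2 / 2 - d1 ^ 2 / 2‖ / 2 := by
    rw [norm_div]; norm_num
  rw [hrw] at this
  have hd12 : ‖d1 / 2‖ ^ 2 = ‖d1‖ ^ 2 / 4 := by
    rw [norm_div]
    norm_num
    ring
  rw [hd12] at this
  linarith
set_option maxHeartbeats 1000000 in
/-- Let `B₁ > 0` be real, `B₂ ∈ ℂ`, `B₃ ∈ ℝ`, let `p` be in the Carathéodory class `P` with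
Taylor coefficients `c₁, c₂`, and set `B₄ = |4B₂ + 2B₃|` and
`Ψ₋ = B₁|c₁| - |B₂ c₁² + B₃ c₂|`. Then: if `B₁ ≥ B₄ + 2|B₃|`, `Ψ₋ ≤ 2B₁ - B₄`;
if `B₁² ≤ 2|B₃|(B₄ + 2|B₃|)`, `Ψ₋ ≤ 2B₁ √(2|B₃|/(B₄ + 2|B₃|))`; and otherwise
`Ψ₋ ≤ 2|B₃| + B₁²/(B₄ + 2|B₃|)`. -/
theorem caratheodory_psi_minus_bound
    (B₁ B₃ : ℝ) (B₂ : ℂ) (hB₁ : 0 < B₁)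
    (p : ℂ → ℂ)
    (hp : DifferentiableOn ℂ p (ball (0 : ℂ) 1))
    (hp0 : p 0 = 1)
    (hpre : ∀ z ∈ ball (0 : ℂ) 1, 0 < (p z).re)
    (c₁ c₂ : ℂ)
    (hc₁ : c₁ = deriv p 0)
    (hc₂ : c₂ = iteratedDeriv 2 p 0 / 2)
    (B₄ Ψ : ℝ)
    (hB₄ : B₄ = ‖4 * B₂ + 2 * (B₃ : ℂ)‖)
    (hΨ : Ψ = B₁ * ‖c₁‖ - ‖B₂ * c₁ ^ 2 + (B₃ : ℂ) * c₂‖) :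
    (B₁ ≥ B₄ + 2 * |B₃| → Ψ ≤ 2 * B₁ - B₄) ∧
    (B₁ ^ 2 ≤ 2 * |B₃| * (B₄ + 2 * |B₃|) →
      Ψ ≤ 2 * B₁ * Real.sqrt (2 * |B₃| / (B₄ + 2 * |B₃|))) ∧
    (¬ B₁ ≥ B₄ + 2 * |B₃| → ¬ B₁ ^ 2 ≤ 2 * |B₃| * (B₄ + 2 * |B₃|) →
      Ψ ≤ 2 * |B₃| + B₁ ^ 2 / (B₄ + 2 * |B₃|)) := by
  obtain ⟨hn1, hn2⟩ := caratheodory_coeff_bounds p hp hp0 hpre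
  rw [← hc₁] at hn1 hn2
  rw [← hc₂] at hn2
  set t := ‖c₁‖ with ht_def
  set K := ‖c₂ - c₁ ^ 2 / 2‖ with hK_def
  have ht0 : 0 ≤ t := norm_nonneg _
  have ht2 : t ≤ 2 := by exact hn1
  have hK' : K ≤ 2 - t ^ 2 / 2 := by
    have := hn2
    exact this
  have hK0 : 0 ≤ K := norm_nonneg _
  have hB₄0 : 0 ≤ B₄ := hB₄ ▸ norm_nonneg _
  have hB₄4 : ‖B₂ + (B₃ : ℂ) / 2‖ = B₄ / 4 := by
    have : (4 : ℂ) * B₂ + 2 * (B₃ : ℂ) = 4 * (B₂ + (B₃ : ℂ) / 2) := by ring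
    rw [hB₄, this, norm_mul, Complex.norm_ofNat]
    ring
  have habs : (B₄ / 4) * t ^ 2 - |B₃| * K ≤ ‖B₂ * c₁ ^ 2 + (B₃ : ℂ) * c₂‖ := by
    have hsplit : B₂ * c₁ ^ 2 + (B₃ : ℂ) * c₂
        = (B₂ + (B₃ : ℂ) / 2) * c₁ ^ 2 + (B₃ : ℂ) * (c₂ - c₁ ^ 2 / 2) := by ring
    have h1 : ‖(B₂ + (B₃ : ℂ) / 2) * c₁ ^ 2‖ = (B₄ / 4) * t ^ 2 := by
      rw [norm_mul, norm_pow, hB₄4]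
    have h2 : ‖(B₃ : ℂ) * (c₂ - c₁ ^ 2 / 2)‖ = |B₃| * K := by
      rw [norm_mul, Complex.norm_real, Real.norm_eq_abs]
    have htri : ‖(B₂ + (B₃ : ℂ) / 2) * c₁ ^ 2‖
        ≤ ‖B₂ * c₁ ^ 2 + (B₃ : ℂ) * c₂‖
          + ‖(B₃ : ℂ) * (c₂ - c₁ ^ 2 / 2)‖ := by
      calc ‖(B₂ + (B₃ : ℂ) / 2) * c₁ ^ 2‖
          = ‖(B₂ * c₁ ^ 2 + (B₃ : ℂ) * c₂) - (B₃ : ℂ) * (c₂ - c₁ ^ 2 / 2)‖ := by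
            rw [hsplit]; ring_nf
        _ ≤ _ := by
            apply norm_sub_le
    rw [h1, h2] at htri
    linarith
  have hΨ1 : Ψ ≤ B₁ * t := by
    rw [hΨ]
    have := norm_nonneg (B₂ * c₁ ^ 2 + (B₃ : ℂ) * c₂)
    linarith
  set A := B₄ + 2 * |B₃| with hA_def
  have hA0 : 0 ≤ A := by positivity
  clear_value t K A
  have hB₃0 : 0 ≤ |B₃| := abs_nonneg _
  have hΨf : Ψ ≤ B₁ * t - (A / 4) * t ^ 2 + 2 * |B₃| := by
    rw [hΨ]
    have h3 : |B₃| * K ≤ |B₃| * (2 - t ^ 2 / 2) :=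
      mul_le_mul_of_nonneg_left hK' hB₃0
    nlinarith [habs]
  refine ⟨?_, ?_, ?_⟩
  · intro h1
    have h4 : 0 ≤ (2 - t) * (4 * B₁ - A * (2 + t)) := by
      apply mul_nonneg (by linarith)
      nlinarith
    nlinarith
  · intro h2
    have hApos : 0 < A := by
      rcases hA0.lt_or_eq with h | h
      · exact h
      · exfalso
        have hB3 : |B₃| = 0 := by simp only [hA_def] at h; linarith
        rw [hB3] at h2
        nlinarith
    set s := Real.sqrt (2 * |B₃| / A) with hs_def
    have hs0 : 0 ≤ s := Real.sqrt_nonneg _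
    have hs2 : s ^ 2 = 2 * |B₃| / A := Real.sq_sqrt (by positivity)
    have hs2' : s ^ 2 * A = 2 * |B₃| := by
      rw [hs2]; field_simp
    clear_value s
    have hsq : (s * A) ^ 2 = 2 * |B₃| * A := by
      rw [mul_pow]; linear_combination A * hs2'
    have hB₁s : B₁ ≤ s * A := by
      apply le_of_pow_le_pow_left₀ two_ne_zero (by positivity)
      rw [hsq]; exact h2
    rcases le_or_gt t (2 * s) with htle | htgt
    · calc Ψ ≤ B₁ * t := hΨ1
        _ ≤ 2 * B₁ * s := by
          have := mul_le_mul_of_nonneg_left htle hB₁.le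
          linarith
    · have key : B₁ * t - (A / 4) * t ^ 2 + 2 * |B₃| ≤ 2 * B₁ * s := by
        have h5 : 0 ≤ (A / 4) * (t - 2 * s) := mul_nonneg (by linarith) (by linarith)
        have h6 : B₁ ≤ (A / 4) * (t + 2 * s) := by nlinarith [h5, hB₁s]
        have h7 : 0 ≤ (t - 2 * s) * ((A / 4) * (t + 2 * s) - B₁) :=
          mul_nonneg (by linarith) (by linarith)
        nlinarith [h7, hs2']
      linarith
  · intro h1 _
    push_neg at h1
    have hApos : 0 < A := lt_trans hB₁ h1
    have hquad : B₁ * t - (A / 4) * t ^ 2 ≤ B₁ ^ 2 / A := by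
      rw [le_div_iff₀ hApos]
      nlinarith [sq_nonneg (A * t - 2 * B₁)]
    linarith
end

section
/- Let f ∈ A with Taylor coefficients a₂, a₃, let w be analytic on 𝔻 with w(0) = 0 and |w(z)| < 1 on 𝔻, and let p be analytic on 𝔻 with p(0) = 1 and Taylor coefficients c₁, c₂, related to w by w(z)·(p(z) + 1) = p(z) − 1 on 𝔻. If f(z) ≠ 0 for all nonzero z ∈ 𝔻 and (z f'(z) − w(z) f(z))² = (1 + w(z)²)·f(z)² for all z ∈ 𝔻 (so that z f'(z)/f(z) = w(z) + √(1 + w(z)²) with the branch equal to 1 at z = 0), then a₂ = c₁/2 and a₃ = c₁²/16 + c₂/4. -/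
open Complex Metric Topology Finset

private lemma aDeriv {u : ℂ → ℂ} {x : ℂ} (hu : AnalyticAt ℂ u x) :
    AnalyticAt ℂ (deriv u) x := by
  have h : AnalyticOnNhd ℂ u {y | AnalyticAt ℂ u y} := fun y hy => hy
  exact h.deriv x hu

private lemma evDiff {u : ℂ → ℂ} {x : ℂ} (hu : AnalyticAt ℂ u x) :
    ∀ᶠ z in 𝓝 x, DifferentiableAt ℂ u z :=
  hu.eventually_analyticAt.mono fun _ hz => hz.differentiableAt

private lemma iD_zero_fun (n : ℕ) (x : ℂ) :
    iteratedDeriv n (fun _ : ℂ => (0 : ℂ)) x = 0 := by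
  induction n generalizing x with
  | zero => simp
  | succ n ih =>
    rw [iteratedDeriv_succ']
    have : deriv (fun _ : ℂ => (0 : ℂ)) = fun _ : ℂ => (0 : ℂ) := by
      funext z; simp
    rw [this, ih]

private lemma iD_const (n : ℕ) (c x : ℂ) :
    iteratedDeriv (n + 1) (fun _ : ℂ => c) x = 0 := by
  rw [iteratedDeriv_succ']
  have : deriv (fun _ : ℂ => c) = fun _ : ℂ => (0 : ℂ) := by funext z; simp
  rw [this, iD_zero_fun]

private lemma iD_add {u v : ℂ → ℂ} {x : ℂ} (hu : AnalyticAt ℂ u x)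
    (hv : AnalyticAt ℂ v x) (n : ℕ) :
    iteratedDeriv n (fun z => u z + v z) x = iteratedDeriv n u x + iteratedDeriv n v x := by
  induction n generalizing u v x with
  | zero => simp
  | succ n ih =>
    have e : deriv (fun z => u z + v z) =ᶠ[𝓝 x] fun z => deriv u z + deriv v z := by
      filter_upwards [evDiff hu, evDiff hv] with z h1 h2
      exact deriv_add h1 h2
    rw [iteratedDeriv_succ', e.iteratedDeriv_eq n, ih (aDeriv hu) (aDeriv hv),
      ← iteratedDeriv_succ', ← iteratedDeriv_succ']

private lemma choose_sum (a b : ℕ → ℂ) (n : ℕ) :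
    ((∑ k ∈ range (n + 1), (n.choose k : ℂ) * a (k + 1) * b (n - k)) +
      ∑ k ∈ range (n + 1), (n.choose k : ℂ) * a k * b (n + 1 - k)) =
    ∑ k ∈ range (n + 2), ((n + 1).choose k : ℂ) * a k * b (n + 1 - k) := by
  rw [Finset.sum_range_succ' (fun k => (((n + 1)).choose k : ℂ) * a k * b (n + 1 - k)) (n + 1),
    Finset.sum_range_succ' (fun k => ((n).choose k : ℂ) * a k * b (n + 1 - k)) n]
  simp only [Nat.choose_succ_succ, Nat.choose_zero_right, Nat.succ_sub_succ, Nat.cast_add,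
    Nat.cast_one, Nat.sub_zero, Nat.cast_ofNat, Nat.succ_eq_add_one]
  have hsplit : ∑ x ∈ range (n + 1), ((n.choose x : ℂ) + (n.choose (x + 1) : ℂ)) * a (x + 1) * b (n - x)
      = (∑ x ∈ range (n + 1), (n.choose x : ℂ) * a (x + 1) * b (n - x)) +
        ∑ x ∈ range (n + 1), (n.choose (x + 1) : ℂ) * a (x + 1) * b (n - x) := by
    rw [← Finset.sum_add_distrib]
    exact Finset.sum_congr rfl fun k _ => by ring
  rw [hsplit]
  have hlast : ∑ x ∈ range (n + 1), ((n.choose (x + 1)) : ℂ) * a (x + 1) * b (n - x)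
      = ∑ x ∈ range n, ((n.choose (x + 1)) : ℂ) * a (x + 1) * b (n - x) := by
    rw [Finset.sum_range_succ]; simp
  rw [hlast]
  ring

private lemma iD_mul {u v : ℂ → ℂ} {x : ℂ} (hu : AnalyticAt ℂ u x)
    (hv : AnalyticAt ℂ v x) (n : ℕ) :
    iteratedDeriv n (fun z => u z * v z) x =
      ∑ k ∈ range (n + 1),
        (n.choose k : ℂ) * iteratedDeriv k u x * iteratedDeriv (n - k) v x := by
  induction n generalizing u v with
  | zero => simp
  | succ n ih =>
    have e : deriv (fun z => u z * v z) =ᶠ[𝓝 x]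
        fun z => deriv u z * v z + u z * deriv v z := by
      filter_upwards [evDiff hu, evDiff hv] with z h1 h2
      exact deriv_mul h1 h2
    rw [iteratedDeriv_succ', e.iteratedDeriv_eq n,
      iD_add (u := fun z => deriv u z * v z) (v := fun z => u z * deriv v z)
        ((aDeriv hu).mul hv) (hu.mul (aDeriv hv)) n,
      ih (aDeriv hu) hv, ih hu (aDeriv hv)]
    have h1 : ∑ k ∈ range (n + 1),
        (n.choose k : ℂ) * iteratedDeriv k (deriv u) x * iteratedDeriv (n - k) v x
        = ∑ k ∈ range (n + 1),
          (n.choose k : ℂ) * iteratedDeriv (k + 1) u x * iteratedDeriv (n - k) v x :=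
      Finset.sum_congr rfl fun k _ => by rw [← iteratedDeriv_succ']
    have h2 : ∑ k ∈ range (n + 1),
        (n.choose k : ℂ) * iteratedDeriv k u x * iteratedDeriv (n - k) (deriv v) x
        = ∑ k ∈ range (n + 1),
          (n.choose k : ℂ) * iteratedDeriv k u x * iteratedDeriv (n + 1 - k) v x := by
      refine Finset.sum_congr rfl fun k hk => ?_
      have hk' : k ≤ n := Nat.lt_succ_iff.mp (Finset.mem_range.mp hk)
      rw [← iteratedDeriv_succ', Nat.succ_sub hk']
    rw [h1, h2]
    exact choose_sum (fun k => iteratedDeriv k u x) (fun k => iteratedDeriv k v x) n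


private lemma iD_sub {u v : ℂ → ℂ} {x : ℂ} (hu : AnalyticAt ℂ u x)
    (hv : AnalyticAt ℂ v x) (n : ℕ) :
    iteratedDeriv n (fun z => u z - v z) x = iteratedDeriv n u x - iteratedDeriv n v x := by
  have h2 : AnalyticAt ℂ (fun z => -(v z)) x := hv.neg
  have h := iD_add hu h2 n
  simp only [iteratedDeriv_fun_neg] at h
  simpa [sub_eq_add_neg] using h

/-- Let `f ∈ A` with Taylor coefficients `a₂, a₃`, let `w` be analytic on `𝔻` with `w 0 = 0`
and `|w z| < 1` on `𝔻`, and let `p` be analytic on `𝔻` with `p 0 = 1` and Taylor coefficients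
`c₁, c₂`, related to `w` by `w z * (p z + 1) = p z - 1` on `𝔻`. If `f z ≠ 0` for all nonzero
`z ∈ 𝔻` and `(z f'(z) - w z * f z)² = (1 + (w z)²) * (f z)²` for all `z ∈ 𝔻` (so that
`z f'(z)/f z = w z + √(1 + (w z)²)` with the branch equal to `1` at `z = 0`), then
`a₂ = c₁/2` and `a₃ = c₁²/16 + c₂/4`. -/
theorem coeff_starlike_lune_subordination
    (f w p : ℂ → ℂ)
    (hf : DifferentiableOn ℂ f (ball (0 : ℂ) 1))
    (hf0 : f 0 = 0) (hf1 : deriv f 0 = 1)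
    (hw : DifferentiableOn ℂ w (ball (0 : ℂ) 1))
    (hw0 : w 0 = 0)
    (hwlt : ∀ z ∈ ball (0 : ℂ) 1, ‖w z‖ < 1)
    (hp : DifferentiableOn ℂ p (ball (0 : ℂ) 1))
    (hp0 : p 0 = 1)
    (hwp : ∀ z ∈ ball (0 : ℂ) 1, w z * (p z + 1) = p z - 1)
    (a₂ a₃ c₁ c₂ : ℂ)
    (ha₂ : a₂ = iteratedDeriv 2 f 0 / 2)
    (ha₃ : a₃ = iteratedDeriv 3 f 0 / 6)
    (hc₁ : c₁ = deriv p 0)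
    (hc₂ : c₂ = iteratedDeriv 2 p 0 / 2)
    (hfne0 : ∀ z ∈ ball (0 : ℂ) 1, z ≠ 0 → f z ≠ 0)
    (heq : ∀ z ∈ ball (0 : ℂ) 1,
      (z * deriv f z - w z * f z) ^ 2 = (1 + (w z) ^ 2) * (f z) ^ 2) :
    a₂ = c₁ / 2 ∧ a₃ = c₁ ^ 2 / 16 + c₂ / 4 := by
  have h0 : (0 : ℂ) ∈ ball (0 : ℂ) 1 := by simp
  have hball : ball (0 : ℂ) 1 ∈ 𝓝 (0 : ℂ) := isOpen_ball.mem_nhds h0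
  have hfA : AnalyticAt ℂ f 0 := (hf.analyticOnNhd isOpen_ball) 0 h0
  have hwA : AnalyticAt ℂ w 0 := (hw.analyticOnNhd isOpen_ball) 0 h0
  have hpA : AnalyticAt ℂ p 0 := (hp.analyticOnNhd isOpen_ball) 0 h0
  have hfdA : AnalyticAt ℂ (deriv f) 0 := aDeriv hfA
  -- basic iterated derivative facts
  have hf0' : iteratedDeriv 0 f 0 = 0 := by simp [hf0]
  have hf1' : iteratedDeriv 1 f 0 = 1 := by simp [iteratedDeriv_one, hf1]
  have hw0' : iteratedDeriv 0 w 0 = 0 := by simp [hw0]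
  have hdf0 : iteratedDeriv 0 (deriv f) 0 = 1 := by simp [hf1]
  have hdf1 : iteratedDeriv 1 (deriv f) 0 = iteratedDeriv 2 f 0 := by
    rw [← iteratedDeriv_succ']
  have hdf2 : iteratedDeriv 2 (deriv f) 0 = iteratedDeriv 3 f 0 := by
    rw [← iteratedDeriv_succ']
  have hid0 : iteratedDeriv 0 (fun z : ℂ => z) 0 = 0 := by simp
  have hid1 : iteratedDeriv 1 (fun z : ℂ => z) 0 = 1 := by
    simp [iteratedDeriv_one]
  have hidd : deriv (fun z : ℂ => z) = fun _ : ℂ => (1 : ℂ) := by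
    funext z; simp
  have hid2 : iteratedDeriv 2 (fun z : ℂ => z) 0 = 0 := by
    rw [show (2 : ℕ) = 1 + 1 from rfl, iteratedDeriv_succ', hidd, iD_const 0 1 0]
  have hid3 : iteratedDeriv 3 (fun z : ℂ => z) 0 = 0 := by
    rw [show (3 : ℕ) = 2 + 1 from rfl, iteratedDeriv_succ', hidd, iD_const 1 1 0]
  -- part 1 : derivatives of w at 0 from the relation with p
  have hvA : AnalyticAt ℂ (fun z => p z + 1) 0 := hpA.add analyticAt_const
  have hv0 : iteratedDeriv 0 (fun z => p z + 1) 0 = 2 := by simp [hp0]; norm_num [Nat.choose]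
  have hv1 : iteratedDeriv 1 (fun z => p z + 1) 0 = deriv p 0 := by
    rw [iD_add hpA analyticAt_const 1, iD_const 0 1 0, iteratedDeriv_one]; ring
  have hv2 : iteratedDeriv 2 (fun z => p z + 1) 0 = iteratedDeriv 2 p 0 := by
    rw [iD_add hpA analyticAt_const 2, iD_const 1 1 0]; ring
  have hq1 : iteratedDeriv 1 (fun z => p z + (-1)) 0 = deriv p 0 := by
    rw [iD_add hpA (analyticAt_const (v := (-1 : ℂ))) 1, iD_const 0 (-1) 0,
      iteratedDeriv_one]; ring
  have hq2 : iteratedDeriv 2 (fun z => p z + (-1)) 0 = iteratedDeriv 2 p 0 := by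
    rw [iD_add hpA (analyticAt_const (v := (-1 : ℂ))) 2, iD_const 1 (-1) 0]; ring
  have Ewp : (fun z => w z * (p z + 1)) =ᶠ[𝓝 (0 : ℂ)] fun z => p z + (-1) := by
    filter_upwards [hball] with z hz
    rw [hwp z hz]; ring
  have e1 := Ewp.iteratedDeriv_eq 1
  rw [iD_mul hwA hvA 1, hq1] at e1
  simp only [Finset.sum_range_succ, Finset.sum_range_zero, Nat.choose] at e1
  rw [hw0'] at e1
  simp only [hv0, hv1, iteratedDeriv_one] at e1
  norm_num at e1
  -- e1 : deriv w 0 * 2 = deriv p 0 (roughly)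
  have e2 := Ewp.iteratedDeriv_eq 2
  rw [iD_mul hwA hvA 2, hq2] at e2
  simp only [Finset.sum_range_succ, Finset.sum_range_zero] at e2
  rw [hw0'] at e2
  simp only [hv0, hv1, hv2, iteratedDeriv_one] at e2
  norm_num at e2
  -- part 2 : derivatives of f at 0 from the quadratic relation
  have hidA : AnalyticAt ℂ (fun z : ℂ => z) 0 := analyticAt_id
  have hAA : AnalyticAt ℂ (fun z : ℂ => z * deriv f z) 0 := hidA.mul hfdA
  have hBA : AnalyticAt ℂ (fun z => w z * f z) 0 := hwA.mul hfA
  have hLA : AnalyticAt ℂ (fun z : ℂ => z * deriv f z - w z * f z) 0 := hAA.sub hBA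
  have hA0 : iteratedDeriv 0 (fun z : ℂ => z * deriv f z) 0 = 0 := by simp
  have hA1 : iteratedDeriv 1 (fun z : ℂ => z * deriv f z) 0 = 1 := by
    rw [iD_mul hidA hfdA 1]
    simp only [Finset.sum_range_succ, Finset.sum_range_zero, hid0, hid1, hdf0, hdf1]
    norm_num [Nat.choose]
  have hA2 : iteratedDeriv 2 (fun z : ℂ => z * deriv f z) 0 = 2 * iteratedDeriv 2 f 0 := by
    rw [iD_mul hidA hfdA 2]
    simp only [Finset.sum_range_succ, Finset.sum_range_zero, hid0, hid1, hid2, hdf0, hdf1, hdf2]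
    norm_num [Nat.choose]
    try ring
    try ring_nf
  have hA3 : iteratedDeriv 3 (fun z : ℂ => z * deriv f z) 0 = 3 * iteratedDeriv 3 f 0 := by
    rw [iD_mul hidA hfdA 3]
    simp only [Finset.sum_range_succ, Finset.sum_range_zero, hid0, hid1, hid2, hid3,
      hdf0, hdf1, hdf2]
    norm_num [Nat.choose]
    try ring
    try ring_nf
  have hB0 : iteratedDeriv 0 (fun z => w z * f z) 0 = 0 := by simp [hw0]
  have hB1 : iteratedDeriv 1 (fun z => w z * f z) 0 = 0 := by
    rw [iD_mul hwA hfA 1]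
    simp only [Finset.sum_range_succ, Finset.sum_range_zero, hw0', hf0', hf1']
    norm_num [Nat.choose]
  have hB2 : iteratedDeriv 2 (fun z => w z * f z) 0 = 2 * deriv w 0 := by
    rw [iD_mul hwA hfA 2]
    simp only [Finset.sum_range_succ, Finset.sum_range_zero, hw0', hf0', hf1',
      iteratedDeriv_one]
    norm_num [Nat.choose]
  have hB3 : iteratedDeriv 3 (fun z => w z * f z) 0
      = 3 * deriv w 0 * iteratedDeriv 2 f 0 + 3 * iteratedDeriv 2 w 0 := by
    rw [iD_mul hwA hfA 3]
    simp only [Finset.sum_range_succ, Finset.sum_range_zero, hw0', hf0', hf1',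
      iteratedDeriv_one]
    norm_num [Nat.choose]
    try ring
    try ring_nf
  have hL0 : iteratedDeriv 0 (fun z : ℂ => z * deriv f z - w z * f z) 0 = 0 := by
    rw [iD_sub hAA hBA 0, hA0, hB0]; ring
  have hL1 : iteratedDeriv 1 (fun z : ℂ => z * deriv f z - w z * f z) 0 = 1 := by
    rw [iD_sub hAA hBA 1, hA1, hB1]; ring
  have hL2 : iteratedDeriv 2 (fun z : ℂ => z * deriv f z - w z * f z) 0
      = 2 * iteratedDeriv 2 f 0 - 2 * deriv w 0 := by
    rw [iD_sub hAA hBA 2, hA2, hB2]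
  have hL3 : iteratedDeriv 3 (fun z : ℂ => z * deriv f z - w z * f z) 0
      = 3 * iteratedDeriv 3 f 0
        - (3 * deriv w 0 * iteratedDeriv 2 f 0 + 3 * iteratedDeriv 2 w 0) := by
    rw [iD_sub hAA hBA 3, hA3, hB3]
  have hffA : AnalyticAt ℂ (fun z => f z * f z) 0 := hfA.mul hfA
  have hff0 : iteratedDeriv 0 (fun z => f z * f z) 0 = 0 := by simp [hf0]
  have hff1 : iteratedDeriv 1 (fun z => f z * f z) 0 = 0 := by
    rw [iD_mul hfA hfA 1]
    simp only [Finset.sum_range_succ, Finset.sum_range_zero, hf0', hf1']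
    norm_num [Nat.choose]
  have hff2 : iteratedDeriv 2 (fun z => f z * f z) 0 = 2 := by
    rw [iD_mul hfA hfA 2]
    simp only [Finset.sum_range_succ, Finset.sum_range_zero, hf0', hf1']
    norm_num [Nat.choose]
  have hff3 : iteratedDeriv 3 (fun z => f z * f z) 0 = 6 * iteratedDeriv 2 f 0 := by
    rw [iD_mul hfA hfA 3]
    simp only [Finset.sum_range_succ, Finset.sum_range_zero, hf0', hf1']
    norm_num [Nat.choose]
    try ring
    try ring_nf
  have hff4 : iteratedDeriv 4 (fun z => f z * f z) 0
      = 8 * iteratedDeriv 3 f 0 + 6 * iteratedDeriv 2 f 0 * iteratedDeriv 2 f 0 := by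
    rw [iD_mul hfA hfA 4]
    simp only [Finset.sum_range_succ, Finset.sum_range_zero, hf0', hf1']
    norm_num [Nat.choose]
    try ring
    try ring_nf
  have hwwA : AnalyticAt ℂ (fun z => w z * w z) 0 := hwA.mul hwA
  have hggA : AnalyticAt ℂ (fun z : ℂ => 1 + w z * w z) 0 := analyticAt_const.add hwwA
  have hg0 : iteratedDeriv 0 (fun z : ℂ => 1 + w z * w z) 0 = 1 := by simp [hw0]
  have hg1 : iteratedDeriv 1 (fun z : ℂ => 1 + w z * w z) 0 = 0 := by
    rw [iD_add analyticAt_const hwwA 1, iD_const 0 1 0, iD_mul hwA hwA 1]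
    simp only [Finset.sum_range_succ, Finset.sum_range_zero, hw0']
    norm_num [Nat.choose]
  have hg2 : iteratedDeriv 2 (fun z : ℂ => 1 + w z * w z) 0
      = 2 * deriv w 0 * deriv w 0 := by
    rw [iD_add analyticAt_const hwwA 2, iD_const 1 1 0, iD_mul hwA hwA 2]
    simp only [Finset.sum_range_succ, Finset.sum_range_zero, hw0', iteratedDeriv_one]
    norm_num [Nat.choose]
    try ring
    try ring_nf
  have Eheq : (fun z : ℂ => (z * deriv f z - w z * f z) * (z * deriv f z - w z * f z))
      =ᶠ[𝓝 (0 : ℂ)] fun z => (1 + w z * w z) * (f z * f z) := by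
    filter_upwards [hball] with z hz
    have h := heq z hz
    calc (z * deriv f z - w z * f z) * (z * deriv f z - w z * f z)
        = (z * deriv f z - w z * f z) ^ 2 := by ring
      _ = (1 + w z ^ 2) * f z ^ 2 := h
      _ = (1 + w z * w z) * (f z * f z) := by ring
  have e3 := Eheq.iteratedDeriv_eq 3
  rw [iD_mul hLA hLA 3, iD_mul hggA hffA 3] at e3
  simp only [Finset.sum_range_succ, Finset.sum_range_zero, hL0, hL1, hL2, hL3,
    hg0, hg1, hg2, hff0, hff1, hff2, hff3] at e3
  norm_num [Nat.choose] at e3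
  have e4 := Eheq.iteratedDeriv_eq 4
  rw [iD_mul hLA hLA 4, iD_mul hggA hffA 4] at e4
  simp only [Finset.sum_range_succ, Finset.sum_range_zero, hL0, hL1, hL2, hL3,
    hg0, hg1, hg2, hff0, hff1, hff2, hff3, hff4] at e4
  norm_num [Nat.choose] at e4
  -- final algebra
  have hW1 : deriv w 0 = deriv p 0 / 2 := by linear_combination e1 / 2
  have hF2 : iteratedDeriv 2 f 0 = deriv p 0 := by linear_combination e3 / 6 + e1
  have hW2 : iteratedDeriv 2 w 0 = iteratedDeriv 2 p 0 / 2 - deriv p 0 ^ 2 / 2 := by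
    linear_combination e2 / 2 - deriv p 0 * hW1
  rw [hF2, hW1, hW2] at e4
  have hF3 : iteratedDeriv 3 f 0 = 3 / 8 * deriv p 0 ^ 2 + 3 / 4 * iteratedDeriv 2 p 0 := by
    linear_combination e4 / 16
  constructor
  · rw [ha₂, hc₁]; linear_combination hF2 / 2
  · rw [ha₃, hc₁, hc₂]; linear_combination hF3 / 6
end

section
/- Let f ∈ A with Taylor coefficients a₂, a₃, let w be analytic on 𝔻 with w(0) = 0 and |w(z)| < 1 on 𝔻, and let p be analytic on 𝔻 with p(0) = 1 and Taylor coefficients c₁, c₂, related to w by w(z)·(p(z) + 1) = p(z) − 1 on 𝔻. If f'(z) ≠ 0 for all z ∈ 𝔻 and (f'(z) + z f''(z) − w(z) f'(z))² = (1 + w(z)²)·f'(z)² for all z ∈ 𝔻 (so that 1 + z f''(z)/f'(z) = w(z) + √(1 + w(z)²) with the branch equal to 1 at z = 0), then a₂ = c₁/4 and a₃ = c₁²/48 + c₂/12. -/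
open Complex Metric

/-- Let `f ∈ A` with Taylor coefficients `a₂, a₃`, let `w` be analytic on `𝔻` with `w 0 = 0`
and `|w z| < 1` on `𝔻`, and let `p` be analytic on `𝔻` with `p 0 = 1` and Taylor coefficients
`c₁, c₂`, related to `w` by `w z * (p z + 1) = p z - 1` on `𝔻`. If `f'(z) ≠ 0` for all
`z ∈ 𝔻` and `(f'(z) + z f''(z) - w z * f'(z))² = (1 + (w z)²) * (f'(z))²` for all `z ∈ 𝔻`
(so that `1 + z f''(z)/f'(z) = w z + √(1 + (w z)²)` with the branch equal to `1` at `z = 0`),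
then `a₂ = c₁/4` and `a₃ = c₁²/48 + c₂/12`. -/
theorem coeff_convex_lune_subordination
    (f w p : ℂ → ℂ)
    (hf : DifferentiableOn ℂ f (ball (0 : ℂ) 1))
    (hf0 : f 0 = 0) (hf1 : deriv f 0 = 1)
    (hw : DifferentiableOn ℂ w (ball (0 : ℂ) 1))
    (hw0 : w 0 = 0)
    (hwlt : ∀ z ∈ ball (0 : ℂ) 1, ‖w z‖ < 1)
    (hp : DifferentiableOn ℂ p (ball (0 : ℂ) 1))
    (hp0 : p 0 = 1)
    (hwp : ∀ z ∈ ball (0 : ℂ) 1, w z * (p z + 1) = p z - 1)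
    (a₂ a₃ c₁ c₂ : ℂ)
    (ha₂ : a₂ = iteratedDeriv 2 f 0 / 2)
    (ha₃ : a₃ = iteratedDeriv 3 f 0 / 6)
    (hc₁ : c₁ = deriv p 0)
    (hc₂ : c₂ = iteratedDeriv 2 p 0 / 2)
    (hfne0 : ∀ z ∈ ball (0 : ℂ) 1, deriv f z ≠ 0)
    (heq : ∀ z ∈ ball (0 : ℂ) 1,
      (deriv f z + z * deriv (deriv f) z - w z * deriv f z) ^ 2
        = (1 + (w z) ^ 2) * (deriv f z) ^ 2) :
    a₂ = c₁ / 4 ∧ a₃ = c₁ ^ 2 / 48 + c₂ / 12 := by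
  have h0 : (0:ℂ) ∈ ball (0:ℂ) 1 := by simp
  have hball : ball (0:ℂ) 1 ∈ nhds (0:ℂ) := isOpen_ball.mem_nhds h0
  have hfa : AnalyticOnNhd ℂ f (ball (0:ℂ) 1) := hf.analyticOnNhd isOpen_ball
  have hq1 : AnalyticOnNhd ℂ (deriv f) (ball (0:ℂ) 1) := hfa.deriv
  have hq2 : AnalyticOnNhd ℂ (deriv (deriv f)) (ball (0:ℂ) 1) := hq1.deriv
  have hq3 : AnalyticOnNhd ℂ (deriv (deriv (deriv f))) (ball (0:ℂ) 1) := hq2.deriv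
  have hwa : AnalyticOnNhd ℂ w (ball (0:ℂ) 1) := hw.analyticOnNhd isOpen_ball
  have hwd : AnalyticOnNhd ℂ (deriv w) (ball (0:ℂ) 1) := hwa.deriv
  have hpa : AnalyticOnNhd ℂ p (ball (0:ℂ) 1) := hp.analyticOnNhd isOpen_ball
  have hpd : AnalyticOnNhd ℂ (deriv p) (ball (0:ℂ) 1) := hpa.deriv
  have Hw : ∀ z ∈ ball (0:ℂ) 1, HasDerivAt w (deriv w z) z :=
    fun z hz => ((hwa z hz).differentiableAt).hasDerivAt
  have Hw' : ∀ z ∈ ball (0:ℂ) 1, HasDerivAt (deriv w) (deriv (deriv w) z) z :=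
    fun z hz => ((hwd z hz).differentiableAt).hasDerivAt
  have Hq : ∀ z ∈ ball (0:ℂ) 1, HasDerivAt (deriv f) (deriv (deriv f) z) z :=
    fun z hz => ((hq1 z hz).differentiableAt).hasDerivAt
  have Hq' : ∀ z ∈ ball (0:ℂ) 1, HasDerivAt (deriv (deriv f)) (deriv (deriv (deriv f)) z) z :=
    fun z hz => ((hq2 z hz).differentiableAt).hasDerivAt
  have Hq'' : ∀ z ∈ ball (0:ℂ) 1,
      HasDerivAt (deriv (deriv (deriv f))) (deriv (deriv (deriv (deriv f))) z) z :=
    fun z hz => ((hq3 z hz).differentiableAt).hasDerivAt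
  have Hp : ∀ z ∈ ball (0:ℂ) 1, HasDerivAt p (deriv p z) z :=
    fun z hz => ((hpa z hz).differentiableAt).hasDerivAt
  have Hp' : ∀ z ∈ ball (0:ℂ) 1, HasDerivAt (deriv p) (deriv (deriv p) z) z :=
    fun z hz => ((hpd z hz).differentiableAt).hasDerivAt
  -- the main identity as a vanishing function
  have hEev : (fun z => (deriv f z + z * deriv (deriv f) z - w z * deriv f z) ^ 2
        - (1 + (w z) ^ 2) * (deriv f z) ^ 2) =ᶠ[nhds (0:ℂ)] (fun _ => (0:ℂ)) := by
    filter_upwards [hball] with z hz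
    rw [heq z hz]; ring
  -- its first derivative (tidy form)
  have hD1 : ∀ z ∈ ball (0:ℂ) 1, HasDerivAt
      (fun z => (deriv f z + z * deriv (deriv f) z - w z * deriv f z) ^ 2
        - (1 + (w z) ^ 2) * (deriv f z) ^ 2)
      (2 * (deriv f z + z * deriv (deriv f) z - w z * deriv f z) *
          (2 * deriv (deriv f) z + z * deriv (deriv (deriv f)) z
            - deriv w z * deriv f z - w z * deriv (deriv f) z)
        - 2 * w z * deriv w z * deriv f z ^ 2
        - (1 + w z ^ 2) * (2 * deriv f z * deriv (deriv f) z)) z := by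
    intro z hz
    have h1 := ((Hq z hz).add ((hasDerivAt_id' (x := z)).mul (Hq' z hz))).sub
      ((Hw z hz).mul (Hq z hz))
    have h4 := (h1.pow 2).sub ((((Hw z hz).pow 2).const_add 1).mul ((Hq z hz).pow 2))
    exact (h4.congr_of_eventuallyEq (Filter.Eventually.of_forall fun x => by
      simp only [Pi.mul_apply, Pi.add_apply, Pi.sub_apply, Pi.pow_apply])).congr_deriv (by simp only [Pi.mul_apply, Pi.add_apply, Pi.sub_apply, Pi.pow_apply]; ring)
  have hD1ev : (fun z => 2 * (deriv f z + z * deriv (deriv f) z - w z * deriv f z) *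
          (2 * deriv (deriv f) z + z * deriv (deriv (deriv f)) z
            - deriv w z * deriv f z - w z * deriv (deriv f) z)
        - 2 * w z * deriv w z * deriv f z ^ 2
        - (1 + w z ^ 2) * (2 * deriv f z * deriv (deriv f) z)) =ᶠ[nhds (0:ℂ)]
      (fun _ => (0:ℂ)) := by
    have h1 := hEev.deriv
    filter_upwards [hball, h1] with z hz h1z
    have h2 := (hD1 z hz).deriv
    exact h2.symm.trans (h1z.trans (by simp))
  have e1 := hD1ev.eq_of_nhds
  beta_reduce at e1
  have hder0 : deriv (fun z => 2 * (deriv f z + z * deriv (deriv f) z - w z * deriv f z) *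
          (2 * deriv (deriv f) z + z * deriv (deriv (deriv f)) z
            - deriv w z * deriv f z - w z * deriv (deriv f) z)
        - 2 * w z * deriv w z * deriv f z ^ 2
        - (1 + w z ^ 2) * (2 * deriv f z * deriv (deriv f) z)) 0 = 0 := by
    have := hD1ev.deriv.eq_of_nhds
    simpa using this
  -- second derivative of the main identity, at 0
  have t1 := ((Hq 0 h0).add ((hasDerivAt_id' (x := (0:ℂ))).mul (Hq' 0 h0))).sub
      ((Hw 0 h0).mul (Hq 0 h0))
  have t2 := ((((Hq' 0 h0).const_mul 2).add ((hasDerivAt_id' (x := (0:ℂ))).mul (Hq'' 0 h0))).sub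
      ((Hw' 0 h0).mul (Hq 0 h0))).sub ((Hw 0 h0).mul (Hq' 0 h0))
  have tX := (t1.const_mul 2).mul t2
  have tY := (((Hw 0 h0).const_mul 2).mul (Hw' 0 h0)).mul ((Hq 0 h0).pow 2)
  have tZ := (((Hw 0 h0).pow 2).const_add 1).mul (((Hq 0 h0).const_mul 2).mul (Hq' 0 h0))
  have hcomb := (tX.sub tY).sub tZ
  have hD2 : HasDerivAt (fun z => 2 * (deriv f z + z * deriv (deriv f) z - w z * deriv f z) *
          (2 * deriv (deriv f) z + z * deriv (deriv (deriv f)) z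
            - deriv w z * deriv f z - w z * deriv (deriv f) z)
        - 2 * w z * deriv w z * deriv f z ^ 2
        - (1 + w z ^ 2) * (2 * deriv f z * deriv (deriv f) z)) _ 0 :=
    hcomb.congr_of_eventuallyEq (by filter_upwards with z; simp only [Pi.mul_apply, Pi.add_apply, Pi.sub_apply, Pi.pow_apply])
  have e3 := hD2.deriv
  rw [hder0] at e3
  replace e3 := e3.symm
  simp only [Pi.mul_apply, Pi.add_apply, Pi.sub_apply, Pi.pow_apply] at e3
  -- the subordination identity
  have hKev : (fun z => w z * (p z + 1) - (p z - 1)) =ᶠ[nhds (0:ℂ)] (fun _ => (0:ℂ)) := by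
    filter_upwards [hball] with z hz
    rw [hwp z hz]; ring
  have hK1 : ∀ z ∈ ball (0:ℂ) 1, HasDerivAt (fun z => w z * (p z + 1) - (p z - 1))
      (deriv w z * (p z + 1) + w z * deriv p z - deriv p z) z := by
    intro z hz
    have h1 := ((Hw z hz).mul ((Hp z hz).add_const 1)).sub ((Hp z hz).sub_const 1)
    exact (h1.congr_of_eventuallyEq (Filter.Eventually.of_forall fun x => by
      simp only [Pi.mul_apply, Pi.add_apply, Pi.sub_apply, Pi.pow_apply])).congr_deriv (by simp only [Pi.mul_apply, Pi.add_apply, Pi.sub_apply, Pi.pow_apply])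
  have hK1ev : (fun z => deriv w z * (p z + 1) + w z * deriv p z - deriv p z)
      =ᶠ[nhds (0:ℂ)] (fun _ => (0:ℂ)) := by
    have h1 := hKev.deriv
    filter_upwards [hball, h1] with z hz h1z
    have h2 := (hK1 z hz).deriv
    exact h2.symm.trans (h1z.trans (by simp))
  have eK1 := hK1ev.eq_of_nhds
  beta_reduce at eK1
  have hderK0 : deriv (fun z => deriv w z * (p z + 1) + w z * deriv p z - deriv p z) 0 = 0 := by
    have := hK1ev.deriv.eq_of_nhds
    simpa using this
  have hcombK := (((Hw' 0 h0).mul ((Hp 0 h0).add_const 1)).add ((Hw 0 h0).mul (Hp' 0 h0))).sub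
      (Hp' 0 h0)
  have hK2 : HasDerivAt (fun z => deriv w z * (p z + 1) + w z * deriv p z - deriv p z) _ 0 :=
    hcombK.congr_of_eventuallyEq (by filter_upwards with z; simp only [Pi.mul_apply, Pi.add_apply, Pi.sub_apply, Pi.pow_apply])
  have eK2 := hK2.deriv
  rw [hderK0] at eK2
  replace eK2 := eK2.symm
  beta_reduce at eK2
  -- iterated derivative bookkeeping
  have hitf2 : iteratedDeriv 2 f 0 = deriv (deriv f) 0 := by
    simp [iteratedDeriv_succ, iteratedDeriv_zero]
  have hitf3 : iteratedDeriv 3 f 0 = deriv (deriv (deriv f)) 0 := by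
    simp [iteratedDeriv_succ, iteratedDeriv_zero]
  have hp''2 : deriv (deriv p) 0 = 2 * c₂ := by
    rw [hc₂, show iteratedDeriv 2 p 0 = deriv (deriv p) 0 from by
      simp [iteratedDeriv_succ, iteratedDeriv_zero]]
    ring
  -- solve the linear equations
  rw [hp0, hw0, ← hc₁] at eK1
  have hV : deriv w 0 = c₁ / 2 := by linear_combination eK1 / 2
  rw [hp0, hw0, ← hc₁, hp''2, hV] at eK2
  have hV2 : deriv (deriv w) 0 = c₂ - c₁ ^ 2 / 2 := by linear_combination eK2 / 2
  rw [hf1, hw0, hV] at e1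
  have hA : deriv (deriv f) 0 = c₁ / 2 := by linear_combination e1 / 2
  rw [hf1, hw0, hV, hV2, hA] at e3
  have hB : deriv (deriv (deriv f)) 0 = c₁ ^ 2 / 8 + c₂ / 2 := by linear_combination e3 / 4
  constructor
  · rw [ha₂, hitf2, hA]; ring
  · rw [ha₃, hitf3, hB]; ring
end
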